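/- arXiv:1608.06929 — 13 statements merged into one kernel-verified Lean document; each statement's English description precedes it below -/
import Mathlib

section
/- Let γ > 2 and define h : (0,∞) → ℝ by h(t) = (t+1)²(1 − 1/t²) − γ² · Log(t²). Then h has exactly one zero in the open interval (1, ∞). -/
open Real Set Filter

private noncomputable def Fγ (γ : ℝ) : ℝ → ℝ :=
  fun t => (t + 1) ^ 2 * (1 - 1 / t ^ 2) - γ ^ 2 * Real.log (t ^ 2)

private noncomputable def Gγ (γ : ℝ) : ℝ → ℝ :=
  fun t => 2 * t + 2 + 2 / t ^ 2 + 2 / t ^ 3 - 2 * γ ^ 2 / t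

private lemma hasDerivAt_Fγ (γ : ℝ) {t : ℝ} (ht : 0 < t) :
    HasDerivAt (Fγ γ) (Gγ γ t) t := by
  have hne : t ≠ 0 := ht.ne'
  have h1 := (hasDerivAt_id' (𝕜 := ℝ) (x := t)).add_const 1 |>.pow 2
  have h2 := ((hasDerivAt_pow 2 t).inv (pow_ne_zero 2 hne)).const_sub 1
  have h3 := ((hasDerivAt_pow 2 t).log (pow_ne_zero 2 hne)).const_mul (γ ^ 2)
  have h4 := (h1.mul h2).sub h3
  unfold Fγ Gγ
  convert h4 using 1
  · rfl
  · rfl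
  · funext s; rw [one_div]; rfl
  · simp only [Pi.inv_apply]
    show _ = _ * (1 - (t ^ 2)⁻¹) + (t + 1) ^ 2 * _ - _
    field_simp
    ring

private lemma hasDerivAt_Gγ (γ : ℝ) {t : ℝ} (ht : 0 < t) :
    HasDerivAt (Gγ γ) (2 - 4 / t ^ 3 - 6 / t ^ 4 + 2 * γ ^ 2 / t ^ 2) t := by
  have hne : t ≠ 0 := ht.ne'
  have h1 : HasDerivAt (fun s : ℝ => 2 * s + 2) (2 * 1) t :=
    ((hasDerivAt_id' (𝕜 := ℝ) (x := t)).const_mul 2).add_const 2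
  have h2 : HasDerivAt (fun s : ℝ => 2 / s ^ 2)
      (2 * (-(2 * t ^ 1) / (t ^ 2) ^ 2)) t := by
    have := ((hasDerivAt_pow 2 t).inv (pow_ne_zero 2 hne)).const_mul 2
    simpa [div_eq_mul_inv] using this
  have h3 : HasDerivAt (fun s : ℝ => 2 / s ^ 3)
      (2 * (-(3 * t ^ 2) / (t ^ 3) ^ 2)) t := by
    have := ((hasDerivAt_pow 3 t).inv (pow_ne_zero 3 hne)).const_mul 2
    simpa [div_eq_mul_inv] using this
  have h4 : HasDerivAt (fun s : ℝ => 2 * γ ^ 2 / s)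
      ((2 * γ ^ 2) * (-(t ^ 2)⁻¹)) t := by
    have := (hasDerivAt_inv hne).const_mul (2 * γ ^ 2)
    simpa [div_eq_mul_inv] using this
  have h5 := ((h1.add h2).add h3).sub h4
  convert h5 using 1
  · rfl
  · rfl
  · rfl
  field_simp
  ring

private lemma Gγ_strictMonoOn (γ : ℝ) (hγ : 2 < γ) : StrictMonoOn (Gγ γ) (Ioi 1) := by
  have hγ4 : 4 < γ ^ 2 := by nlinarith
  apply strictMonoOn_of_deriv_pos (convex_Ioi 1)
  · intro x hx
    exact (hasDerivAt_Gγ γ (lt_trans one_pos hx)).continuousAt.continuousWithinAt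
  · intro x hx
    rw [interior_Ioi] at hx
    have hx0 : (0 : ℝ) < x := lt_trans one_pos hx
    rw [(hasDerivAt_Gγ γ hx0).deriv]
    have hrw : 2 - 4 / x ^ 3 - 6 / x ^ 4 + 2 * γ ^ 2 / x ^ 2
        = (2 * x ^ 4 + 2 * γ ^ 2 * x ^ 2 - 4 * x - 6) / x ^ 4 := by
      field_simp; ring
    rw [hrw]
    apply div_pos _ (by positivity)
    nlinarith [mul_pos (sub_pos.2 hx) (show (0:ℝ) < x ^ 3 + x ^ 2 + 5 * x + 3 by positivity),
      mul_le_mul_of_nonneg_right hγ4.le (sq_nonneg x), sq_nonneg x, mul_pos hx0 hx0]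

private lemma Fγ_contOn (γ : ℝ) {s : Set ℝ} (hs : ∀ x ∈ s, (0:ℝ) < x) :
    ContinuousOn (Fγ γ) s := fun x hx =>
  (hasDerivAt_Fγ γ (hs x hx)).continuousAt.continuousWithinAt

private lemma Fγ_one (γ : ℝ) : Fγ γ 1 = 0 := by
  simp [Fγ]

private lemma Fγ_eq (γ : ℝ) {t : ℝ} (ht : 0 < t) :
    Fγ γ t = t ^ 2 + 2 * t - 2 / t - 1 / t ^ 2 - 2 * γ ^ 2 * Real.log t := by
  have : Real.log (t ^ 2) = 2 * Real.log t := by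
    rw [Real.log_pow]; push_cast; ring
  simp only [Fγ, this]
  field_simp
  ring

/-- No two distinct zeros in `(1,∞)`. -/
private lemma Fγ_zeros_eq (γ : ℝ) (hγ : 2 < γ) {x y : ℝ} (hx : 1 < x) (hy : 1 < y)
    (hfx : Fγ γ x = 0) (hfy : Fγ γ y = 0) : x = y := by
  have key : ∀ a b : ℝ, 1 < a → 1 < b → Fγ γ a = 0 → Fγ γ b = 0 → a < b → False := by
    intro a b ha hb hfa hfb hab
    have hIa : ContinuousOn (Fγ γ) (Icc 1 a) :=
      Fγ_contOn γ (fun z hz => lt_of_lt_of_le one_pos hz.1)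
    have hIb : ContinuousOn (Fγ γ) (Icc a b) :=
      Fγ_contOn γ (fun z hz => lt_of_lt_of_le one_pos (le_trans ha.le hz.1))
    obtain ⟨c, hc, hc0⟩ := exists_deriv_eq_zero ha hIa (by rw [Fγ_one, hfa])
    obtain ⟨d, hd, hd0⟩ := exists_deriv_eq_zero hab hIb (by rw [hfa, hfb])
    have hc1 : 1 < c := hc.1
    have hd1 : 1 < d := lt_trans ha hd.1
    have hGc : Gγ γ c = 0 := by
      rw [← (hasDerivAt_Fγ γ (lt_trans one_pos hc1)).deriv]; exact hc0
    have hGd : Gγ γ d = 0 := by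
      rw [← (hasDerivAt_Fγ γ (lt_trans one_pos hd1)).deriv]; exact hd0
    have hcd : c < d := lt_trans hc.2 hd.1
    have := Gγ_strictMonoOn γ hγ hc1 hd1 hcd
    rw [hGc, hGd] at this
    exact lt_irrefl 0 this
  rcases lt_trichotomy x y with h | h | h
  · exact (key x y hx hy hfx hfy h).elim
  · exact h
  · exact (key y x hy hx hfy hfx h).elim

/-- For `γ > 2`, the function `h(t) = (t+1)^2 (1 - 1/t^2) - γ^2 Log(t^2)`
has exactly one zero in the open interval `(1, ∞)`. -/
theorem h_has_unique_zero (γ : ℝ) (hγ : 2 < γ) :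
    ∃! t : ℝ, t ∈ Set.Ioi (1 : ℝ) ∧
      (t + 1) ^ 2 * (1 - 1 / t ^ 2) - γ ^ 2 * Real.log (t ^ 2) = 0 := by
  have hFdef : ∀ t : ℝ, (t + 1) ^ 2 * (1 - 1 / t ^ 2) - γ ^ 2 * Real.log (t ^ 2) = Fγ γ t :=
    fun t => rfl
  -- a point a > 1 where Fγ is negative
  have hderiv1 : HasDerivAt (Fγ γ) (Gγ γ 1) 1 := hasDerivAt_Fγ γ one_pos
  have hG1 : Gγ γ 1 < 0 := by
    simp only [Gγ]; nlinarith
  have hslope : Tendsto (slope (Fγ γ) 1) (nhdsWithin 1 {(1:ℝ)}ᶜ) (nhds (Gγ γ 1)) :=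
    hasDerivAt_iff_tendsto_slope.1 hderiv1
  have hev : ∀ᶠ z in nhdsWithin 1 {(1:ℝ)}ᶜ, slope (Fγ γ) 1 z < 0 :=
    hslope.eventually (Iio_mem_nhds hG1)
  have hmono : nhdsWithin (1:ℝ) (Ioi 1) ≤ nhdsWithin 1 {(1:ℝ)}ᶜ :=
    nhdsWithin_mono 1 (fun z hz => ne_of_gt hz)
  have hev2 : ∀ᶠ z in nhdsWithin (1:ℝ) (Ioi 1), slope (Fγ γ) 1 z < 0 :=
    hev.filter_mono hmono
  obtain ⟨a, hsa, ha1'⟩ := (hev2.and eventually_mem_nhdsWithin).exists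
  have ha1 : (1:ℝ) < a := ha1' 
  have hFa : Fγ γ a < 0 := by
    rw [slope_def_field, Fγ_one, sub_zero] at hsa
    have := mul_neg_of_neg_of_pos hsa (show (0:ℝ) < a - 1 by linarith)
    rwa [div_mul_cancel₀ _ (by linarith : a - (1:ℝ) ≠ 0)] at this
  -- a point b > a where Fγ is positive
  set b : ℝ := max (a + 1) (2 * γ ^ 2 + 3) with hbdef
  have hab : a < b := lt_of_lt_of_le (by linarith) (le_max_left _ _)
  have hb1 : (1:ℝ) < b := lt_trans ha1 hab
  have hb0 : (0:ℝ) < b := lt_trans one_pos hb1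
  have hbge : 2 * γ ^ 2 + 3 ≤ b := le_max_right _ _
  have hFb : 0 < Fγ γ b := by
    rw [Fγ_eq γ hb0]
    have hlog : Real.log b ≤ b - 1 := Real.log_le_sub_one_of_pos hb0
    have h2b : 2 / b ≤ 2 := by
      rw [div_le_iff₀ hb0]; linarith
    have h1b : 1 / b ^ 2 ≤ 1 := by
      rw [div_le_one (by positivity)]; nlinarith
    have hbsq : (2 * γ ^ 2 + 3) * b ≤ b ^ 2 := by nlinarith
    nlinarith [sq_nonneg γ, mul_le_mul_of_nonneg_left hlog (by positivity : (0:ℝ) ≤ 2 * γ ^ 2)]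
  -- IVT
  have hcont : ContinuousOn (Fγ γ) (Icc a b) :=
    Fγ_contOn γ (fun z hz => lt_of_lt_of_le (lt_trans one_pos ha1) hz.1)
  obtain ⟨c, hc, hFc⟩ := intermediate_value_Ioo hab.le hcont ⟨hFa, hFb⟩
  have hc1 : (1:ℝ) < c := lt_trans ha1 hc.1
  refine ⟨c, ⟨hc1, (hFdef c).trans hFc⟩, ?_⟩
  intro y hy
  exact Fγ_zeros_eq γ hγ hy.1 hc1 ((hFdef y) ▸ hy.2) hFc
end

section
/- Let 0 < γ ≤ 2. Then the system of equations t₁ e^{−t₁²/2} = t₂ e^{−t₂²/2} and 1/t₁ + 1/t₂ = γ, in the unknowns (t₁, t₂) ∈ (0,∞) × (0,∞), has exactly one solution, given by t₁ = 2/γ and t₂ = 2/γ. -/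
open Real

-- g strictly increasing on (0,1]
lemma g_mono {a b : ℝ} (ha : 0 < a) (hab : a < b) (hb1 : b ≤ 1) :
    Real.log a - a ^ 2 / 2 < Real.log b - b ^ 2 / 2 := by
  have hb : 0 < b := ha.trans hab
  have h := Real.log_lt_sub_one_of_pos (div_pos ha hb)
    (by intro h; rw [div_eq_one_iff_eq hb.ne'] at h; exact hab.ne h)
  rw [Real.log_div ha.ne' hb.ne'] at h
  have h2 : a / b - 1 ≤ (a ^ 2 - b ^ 2) / 2 := by
    rw [div_sub_one hb.ne', div_le_div_iff₀ hb (by norm_num)]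
    have hkey : 0 ≤ (b - a) * (2 - b * (a + b)) := by
      apply mul_nonneg (by linarith)
      nlinarith
    nlinarith [hkey]
  linarith

-- g strictly decreasing on [1,∞)
lemma g_anti {a b : ℝ} (ha : 1 ≤ a) (hab : a < b) :
    Real.log b - b ^ 2 / 2 < Real.log a - a ^ 2 / 2 := by
  have ha0 : (0:ℝ) < a := lt_of_lt_of_le one_pos ha
  have hb : 0 < b := ha0.trans hab
  have h := Real.log_lt_sub_one_of_pos (div_pos hb ha0)
    (by intro h; rw [div_eq_one_iff_eq ha0.ne'] at h; exact hab.ne' h)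
  rw [Real.log_div hb.ne' ha0.ne'] at h
  have h2 : b / a - 1 ≤ (b ^ 2 - a ^ 2) / 2 := by
    rw [div_sub_one ha0.ne', div_le_div_iff₀ ha0 (by norm_num)]
    have hkey : 0 ≤ (b - a) * (a * (a + b) - 2) := by
      apply mul_nonneg (by linarith)
      nlinarith
    nlinarith [hkey]
  linarith

noncomputable def Gfun (x : ℝ) : ℝ := -Real.log x - (x ^ 2)⁻¹ / 2

lemma Gfun_eq {x : ℝ} (hx : 0 < x) :
    Gfun x = Real.log x⁻¹ - (x⁻¹) ^ 2 / 2 := by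
  rw [Real.log_inv, Gfun]
  ring

lemma hasDerivAt_Gfun {x : ℝ} (hx : x ≠ 0) :
    HasDerivAt Gfun (-x⁻¹ + (x ^ 3)⁻¹) x := by
  have h1 : HasDerivAt (fun y : ℝ => y ^ 2) (2 * x) x := by
    simpa using hasDerivAt_pow 2 x
  have h2 : HasDerivAt (fun y : ℝ => (y ^ 2)⁻¹) (-(2 * x) / (x ^ 2) ^ 2) x :=
    h1.inv (pow_ne_zero 2 hx)
  have h3 := ((Real.hasDerivAt_log hx).neg).sub (h2.div_const 2)
  refine (h3 : HasDerivAt (fun y : ℝ => -Real.log y - (y ^ 2)⁻¹ / 2)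
    (-x⁻¹ - -(2 * x) / (x ^ 2) ^ 2 / 2) x).congr_deriv ?_
  field_simp
  ring

lemma hasDerivAt_psi {x : ℝ} (hx0 : x ≠ 0) (hx2 : x ≠ 2) :
    HasDerivAt (fun y => Gfun y - Gfun (2 - y))
      ((-x⁻¹ + (x ^ 3)⁻¹) + (-(2 - x)⁻¹ + ((2 - x) ^ 3)⁻¹)) x := by
  have h1 := hasDerivAt_Gfun hx0
  have hlin : HasDerivAt (fun y : ℝ => 2 - y) (-1) x := by
    simpa using (hasDerivAt_id x).const_sub (2:ℝ)
  have h2 : HasDerivAt (fun y => Gfun (2 - y))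
      ((-(2 - x)⁻¹ + ((2 - x) ^ 3)⁻¹) * (-1)) x :=
    (hasDerivAt_Gfun (by intro h; apply hx2; linarith [sub_eq_zero.mp h])).comp x hlin
  refine (h1.sub h2 : HasDerivAt (fun y => Gfun y - Gfun (2 - y))
    ((-x⁻¹ + (x ^ 3)⁻¹) - (-(2 - x)⁻¹ + ((2 - x) ^ 3)⁻¹) * (-1)) x).congr_deriv ?_
  ring

lemma psi_pos {x : ℝ} (h1 : 1 < x) (h2 : x < 2) :
    0 < Gfun x - Gfun (2 - x) := by
  have key : StrictMonoOn (fun y => Gfun y - Gfun (2 - y)) (Set.Ico 1 2) := by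
    apply strictMonoOn_of_deriv_pos (convex_Ico 1 2)
    · intro y hy
      exact (hasDerivAt_psi (by linarith [hy.1] : (y:ℝ) ≠ 0)
        (by linarith [hy.2] : (y:ℝ) ≠ 2)).continuousAt.continuousWithinAt
    · intro y hy
      rw [interior_Ico] at hy
      obtain ⟨hy1, hy2⟩ := hy
      have hy0 : (0:ℝ) < y := by linarith
      have hv : (0:ℝ) < 2 - y := by linarith
      rw [(hasDerivAt_psi hy0.ne' (by linarith)).deriv]
      have heq : (-y⁻¹ + (y ^ 3)⁻¹) + (-(2 - y)⁻¹ + ((2 - y) ^ 3)⁻¹)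
          = ((1 - y ^ 2) * (2 - y) ^ 3 + (1 - (2 - y) ^ 2) * y ^ 3)
            / (y ^ 3 * (2 - y) ^ 3) := by
        field_simp
        ring
      rw [heq]
      apply div_pos
      · have hid : (1 - y ^ 2) * (2 - y) ^ 3 + (1 - (2 - y) ^ 2) * y ^ 3
            = 2 * (y - 1) ^ 2 * (5 - (y - 1) ^ 2) := by ring
        rw [hid]
        have hy1' : (0:ℝ) < y - 1 := by linarith
        apply mul_pos (by positivity)
        nlinarith
      · positivity
  have h0 : Gfun 1 - Gfun (2 - 1) = 0 := by norm_num
  have := key (Set.mem_Ico.mpr ⟨le_refl 1, by norm_num⟩)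
    (Set.mem_Ico.mpr ⟨h1.le, h2⟩) h1
  simpa [h0] using this

lemma key_sum {a b : ℝ} (ha : 0 < a) (hb : 0 < b) (hab : a < b)
    (heq : Real.log a - a ^ 2 / 2 = Real.log b - b ^ 2 / 2) :
    2 < 1 / a + 1 / b := by
  have ha1 : a < 1 := by
    by_contra h
    push_neg at h
    exact absurd heq (ne_of_gt (g_anti h hab))
  have hb1 : 1 < b := by
    by_contra h
    push_neg at h
    exact absurd heq (ne_of_lt (g_mono ha hab h))
  by_cases hx2 : 2 ≤ 1 / a
  · have : 0 < 1 / b := by positivity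
    linarith
  push_neg at hx2
  set x := 1 / a with hxdef
  have hx1 : 1 < x := by
    rw [hxdef]
    rw [lt_div_iff₀ ha]
    linarith
  have hax : a = x⁻¹ := by
    rw [hxdef]
    field_simp
  have hGa : Gfun x = Real.log a - a ^ 2 / 2 := by
    rw [Gfun_eq (by linarith : (0:ℝ) < x), hax]
  have hv : 0 < 2 - x := by linarith
  have hv1 : 2 - x < 1 := by linarith
  set c := (2 - x)⁻¹ with hcdef
  have hc1 : 1 < c := by
    rw [hcdef]
    exact (one_lt_inv₀ hv).mpr hv1
  have hGc : Gfun (2 - x) = Real.log c - c ^ 2 / 2 := by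
    rw [Gfun_eq hv, hcdef]
  have hlt : Real.log c - c ^ 2 / 2 < Real.log b - b ^ 2 / 2 := by
    rw [← hGc, ← heq, ← hGa]
    linarith [psi_pos hx1 hx2]
  have hbc : b < c := by
    rcases lt_trichotomy b c with h | h | h
    · exact h
    · rw [h] at hlt; linarith
    · linarith [g_anti hc1.le h]
  have : 2 - x < 1 / b := by
    rw [lt_div_iff₀ hb]
    calc (2 - x) * b < (2 - x) * c := by
          exact (mul_lt_mul_iff_right₀ hv).mpr hbc
      _ = 1 := by rw [hcdef]; field_simp
  linarith

/-- For `0 < γ ≤ 2`, the system `t₁ e^{-t₁²/2} = t₂ e^{-t₂²/2}`, `1/t₁ + 1/t₂ = γ`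
in positive unknowns has exactly one solution, given by `t₁ = t₂ = 2/γ`. -/
theorem system_unique_solution (γ : ℝ) (h0 : 0 < γ) (h2 : γ ≤ 2) :
    ∀ t₁ t₂ : ℝ,
      (0 < t₁ ∧ 0 < t₂ ∧
        t₁ * Real.exp (-t₁ ^ 2 / 2) = t₂ * Real.exp (-t₂ ^ 2 / 2) ∧
        1 / t₁ + 1 / t₂ = γ) ↔ (t₁ = 2 / γ ∧ t₂ = 2 / γ) := by
  intro t₁ t₂
  constructor
  · rintro ⟨h1, h2', heq, hsum⟩
    have hg : Real.log t₁ - t₁ ^ 2 / 2 = Real.log t₂ - t₂ ^ 2 / 2 := by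
      have := congrArg Real.log heq
      rw [Real.log_mul h1.ne' (Real.exp_ne_zero _), Real.log_exp,
        Real.log_mul h2'.ne' (Real.exp_ne_zero _), Real.log_exp] at this
      linarith
    have hteq : t₁ = t₂ := by
      rcases lt_trichotomy t₁ t₂ with h | h | h
      · linarith [key_sum h1 h2' h hg]
      · exact h
      · linarith [key_sum h2' h1 h hg.symm]
    subst hteq
    have ht : t₁ = 2 / γ := by
      rw [← add_div] at hsum
      rw [eq_div_iff h0.ne']
      rw [div_eq_iff h1.ne'] at hsum
      linarith
    exact ⟨ht, ht⟩
  · rintro ⟨rfl, rfl⟩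
    have ht : (0:ℝ) < 2 / γ := by positivity
    refine ⟨ht, ht, rfl, ?_⟩
    rw [one_div_div, ← add_div]
    ring_nf
end

section
/- Let γ > 2 and let z₀ be the unique zero in (1, ∞) of h(t) = (t+1)²(1 − 1/t²) − γ² · Log(t²). Then the system t₁ e^{−t₁²/2} = t₂ e^{−t₂²/2}, 1/t₁ + 1/t₂ = γ in positive unknowns (t₁, t₂) has exactly three solutions: (2/γ, 2/γ), ((z₀+1)/(γ z₀), (z₀+1)/γ), and ((z₀+1)/γ, (z₀+1)/(γ z₀)). -/
private lemma key_log (a b : ℝ) (ha : 0 < a) (hb : 0 < b) :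
    a * Real.exp (-a ^ 2 / 2) = b * Real.exp (-b ^ 2 / 2) ↔
      Real.log a - a ^ 2 / 2 = Real.log b - b ^ 2 / 2 := by
  have h1 : a * Real.exp (-a ^ 2 / 2) = Real.exp (Real.log a + -a ^ 2 / 2) := by
    rw [Real.exp_add, Real.exp_log ha]
  have h2 : b * Real.exp (-b ^ 2 / 2) = Real.exp (Real.log b + -b ^ 2 / 2) := by
    rw [Real.exp_add, Real.exp_log hb]
  rw [h1, h2, Real.exp_eq_exp]
  constructor <;> intro h <;> linarith

private lemma asym (γ z₀ t₁ t₂ : ℝ) (hγ : 2 < γ) (hz : 1 < z₀)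
    (huniq : ∀ z : ℝ, 1 < z →
      (z + 1) ^ 2 * (1 - 1 / z ^ 2) - γ ^ 2 * Real.log (z ^ 2) = 0 → z = z₀)
    (h1 : 0 < t₁) (h2 : 0 < t₂) (hlt : t₁ < t₂)
    (hexp : Real.log t₁ - t₁ ^ 2 / 2 = Real.log t₂ - t₂ ^ 2 / 2)
    (hsum : 1 / t₁ + 1 / t₂ = γ) :
    t₁ = (z₀ + 1) / (γ * z₀) ∧ t₂ = (z₀ + 1) / γ := by
  have hγ0 : (0:ℝ) < γ := by linarith
  set z := t₂ / t₁ with hzdef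
  have hz1 : 1 < z := (one_lt_div h1).mpr hlt
  have hlogz : Real.log (z ^ 2) = t₂ ^ 2 - t₁ ^ 2 := by
    rw [Real.log_pow, hzdef, Real.log_div h2.ne' h1.ne']
    push_cast
    linarith
  have hγeq : γ = (t₁ + t₂) / (t₁ * t₂) := by
    rw [← hsum]; field_simp; ring
  have halg : (z + 1) ^ 2 * (1 - 1 / z ^ 2) = γ ^ 2 * (t₂ ^ 2 - t₁ ^ 2) := by
    rw [hγeq, hzdef]
    field_simp
    ring
  have hzz : (z + 1) ^ 2 * (1 - 1 / z ^ 2) - γ ^ 2 * Real.log (z ^ 2) = 0 := by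
    rw [hlogz, halg]; ring
  have hz0 : z = z₀ := huniq z hz1 hzz
  have hz0' : (0:ℝ) < z₀ := by linarith
  have ht2 : γ * t₂ = z₀ + 1 := by
    rw [← hz0, hzdef, hγeq]
    field_simp
    ring
  have hzt : z₀ * t₁ = t₂ := by
    rw [← hz0, hzdef]
    field_simp
  have ht1 : γ * z₀ * t₁ = z₀ + 1 := by
    rw [mul_assoc, hzt]; exact ht2
  constructor
  · rw [eq_div_iff (mul_pos hγ0 hz0').ne']
    linear_combination ht1
  · rw [eq_div_iff hγ0.ne']
    linear_combination ht2

/-- For `γ > 2`, with `z₀` the unique zero in `(1, ∞)` of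
`h(t) = (t+1)^2 (1 - 1/t^2) - γ^2 Log(t^2)`, the system
`t₁ e^{-t₁²/2} = t₂ e^{-t₂²/2}`, `1/t₁ + 1/t₂ = γ` in positive unknowns has exactly
three solutions: `(2/γ, 2/γ)`, `((z₀+1)/(γ z₀), (z₀+1)/γ)` and `((z₀+1)/γ, (z₀+1)/(γ z₀))`. -/
theorem system_three_solutions (γ z₀ : ℝ) (hγ : 2 < γ) (hz : 1 < z₀)
    (hzero : (z₀ + 1) ^ 2 * (1 - 1 / z₀ ^ 2) - γ ^ 2 * Real.log (z₀ ^ 2) = 0)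
    (huniq : ∀ z : ℝ, 1 < z →
      (z + 1) ^ 2 * (1 - 1 / z ^ 2) - γ ^ 2 * Real.log (z ^ 2) = 0 → z = z₀) :
    ∀ t₁ t₂ : ℝ,
      (0 < t₁ ∧ 0 < t₂ ∧
        t₁ * Real.exp (-t₁ ^ 2 / 2) = t₂ * Real.exp (-t₂ ^ 2 / 2) ∧
        1 / t₁ + 1 / t₂ = γ) ↔
      ((t₁ = 2 / γ ∧ t₂ = 2 / γ) ∨
       (t₁ = (z₀ + 1) / (γ * z₀) ∧ t₂ = (z₀ + 1) / γ) ∨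
       (t₁ = (z₀ + 1) / γ ∧ t₂ = (z₀ + 1) / (γ * z₀))) := by
  have hγ0 : (0:ℝ) < γ := by linarith
  have hz0 : (0:ℝ) < z₀ := by linarith
  have hz1 : (0:ℝ) < z₀ + 1 := by linarith
  have hpa : (0:ℝ) < (z₀ + 1) / (γ * z₀) := div_pos hz1 (mul_pos hγ0 hz0)
  have hpb : (0:ℝ) < (z₀ + 1) / γ := div_pos hz1 hγ0
  have hlog2 : Real.log (z₀ ^ 2) = 2 * Real.log z₀ := by
    rw [Real.log_pow]; push_cast; ring
  have hdiff : ((z₀ + 1) / γ) ^ 2 - ((z₀ + 1) / (γ * z₀)) ^ 2 = 2 * Real.log z₀ := by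
    have e : ((z₀ + 1) / γ) ^ 2 - ((z₀ + 1) / (γ * z₀)) ^ 2
        = ((z₀ + 1) ^ 2 * (1 - 1 / z₀ ^ 2)) / γ ^ 2 := by
      field_simp
    rw [e, div_eq_iff (by positivity : (0:ℝ) < γ ^ 2).ne']
    rw [hlog2] at hzero
    nlinarith [hzero]
  have hlogdiv : Real.log ((z₀ + 1) / (γ * z₀))
      = Real.log ((z₀ + 1) / γ) - Real.log z₀ := by
    rw [← div_div, Real.log_div hpb.ne' hz0.ne']
  have hsum2 : 1 / ((z₀ + 1) / (γ * z₀)) + 1 / ((z₀ + 1) / γ) = γ := by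
    rw [one_div_div, one_div_div, ← add_div]
    rw [div_eq_iff hz1.ne']
    ring
  intro t₁ t₂
  constructor
  · rintro ⟨h1, h2, heq, hsum⟩
    have hexp := (key_log t₁ t₂ h1 h2).mp heq
    rcases lt_trichotomy t₁ t₂ with hlt | heqt | hgt
    · exact Or.inr (Or.inl (asym γ z₀ t₁ t₂ hγ hz huniq h1 h2 hlt hexp hsum))
    · subst heqt
      have : t₁ * γ = 2 := by
        rw [← hsum]; field_simp; ring
      have ht : t₁ = 2 / γ := by
        rw [eq_div_iff hγ0.ne']; exact this
      exact Or.inl ⟨ht, ht⟩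
    · have := asym γ z₀ t₂ t₁ hγ hz huniq h2 h1 hgt hexp.symm (by linarith)
      exact Or.inr (Or.inr ⟨this.2, this.1⟩)
  · rintro (⟨rfl, rfl⟩ | ⟨rfl, rfl⟩ | ⟨rfl, rfl⟩)
    · refine ⟨div_pos two_pos hγ0, div_pos two_pos hγ0, rfl, ?_⟩
      rw [one_div_div, ← add_div]
      rw [div_eq_iff (two_ne_zero)]
      ring
    · refine ⟨hpa, hpb, ?_, hsum2⟩
      rw [key_log _ _ hpa hpb, hlogdiv]
      linarith [hdiff]
    · refine ⟨hpb, hpa, ?_, ?_⟩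
      · rw [key_log _ _ hpb hpa, hlogdiv]
        linarith [hdiff]
      · rw [add_comm]; exact hsum2
end

section
/- Let γ > 2 and let z₀ > 1 satisfy (z₀+1)²(1 − 1/z₀²) = γ² · Log(z₀²). Then the pair t₁ = (z₀+1)/(γ z₀), t₂ = (z₀+1)/γ satisfies t₁ e^{−t₁²/2} = t₂ e^{−t₂²/2} and 1/t₁ + 1/t₂ = γ, and moreover t₁ < 2/γ < t₂. -/
/-- For `γ > 2` and `z₀ > 1` with `(z₀+1)^2 (1 - 1/z₀^2) = γ^2 Log(z₀^2)`, the pair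
`t₁ = (z₀+1)/(γ z₀)`, `t₂ = (z₀+1)/γ` solves the system
`t₁ e^{-t₁²/2} = t₂ e^{-t₂²/2}`, `1/t₁ + 1/t₂ = γ`, and `t₁ < 2/γ < t₂`. -/
theorem nonsymmetric_pair_solves (γ z₀ : ℝ) (hγ : 2 < γ) (hz : 1 < z₀)
    (hzero : (z₀ + 1) ^ 2 * (1 - 1 / z₀ ^ 2) = γ ^ 2 * Real.log (z₀ ^ 2)) :
    ((z₀ + 1) / (γ * z₀)) * Real.exp (-((z₀ + 1) / (γ * z₀)) ^ 2 / 2) =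
        ((z₀ + 1) / γ) * Real.exp (-((z₀ + 1) / γ) ^ 2 / 2) ∧
      1 / ((z₀ + 1) / (γ * z₀)) + 1 / ((z₀ + 1) / γ) = γ ∧
      (z₀ + 1) / (γ * z₀) < 2 / γ ∧ 2 / γ < (z₀ + 1) / γ := by
  have hγ0 : (0:ℝ) < γ := by linarith
  have hz0 : (0:ℝ) < z₀ := by linarith
  have hγn : γ ≠ 0 := ne_of_gt hγ0
  have hzn : z₀ ≠ 0 := ne_of_gt hz0
  have hz1 : (0:ℝ) < z₀ + 1 := by linarith
  have hlog : Real.log (z₀ ^ 2) = 2 * Real.log z₀ := by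
    rw [show z₀ ^ 2 = z₀ * z₀ by ring, Real.log_mul hzn hzn]; ring
  have h : (z₀ + 1) ^ 2 * (1 - 1 / z₀ ^ 2) = γ ^ 2 * (2 * Real.log z₀) := by
    rw [← hlog]; exact hzero
  have hkey : -((z₀ + 1) / (γ * z₀)) ^ 2 / 2 = Real.log z₀ + -((z₀ + 1) / γ) ^ 2 / 2 := by
    field_simp at h ⊢
    linear_combination h
  refine ⟨?_, ?_, ?_, ?_⟩
  · rw [hkey, Real.exp_add, Real.exp_log hz0]
    field_simp
  · field_simp
  · rw [div_lt_div_iff₀ (mul_pos hγ0 hz0) hγ0]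
    nlinarith
  · rw [div_lt_div_iff₀ hγ0 hγ0]
    nlinarith
end

section
/- Let 0 < t₁ < 1 < t₂ be real numbers with t₁ − t₁³ = t₂³ − t₂. Then t₂ ≤ 2√3/3. -/
/-- If `0 < t₁ < 1 < t₂` and `t₁ - t₁³ = t₂³ - t₂`, then `t₂ ≤ 2√3/3`. -/
theorem t2_le_bound (t₁ t₂ : ℝ) (h1 : 0 < t₁) (h2 : t₁ < 1) (h3 : 1 < t₂)
    (heq : t₁ - t₁ ^ 3 = t₂ ^ 3 - t₂) : t₂ ≤ 2 * Real.sqrt 3 / 3 := by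
  set s := Real.sqrt 3 with hs
  have hs2 : s ^ 2 = 3 := Real.sq_sqrt (by norm_num)
  have hs0 : 0 < s := Real.sqrt_pos.mpr (by norm_num)
  by_contra h
  push_neg at h
  have hst : 2 < s * t₂ := by nlinarith
  have hA : 0 ≤ (s * t₁ - 1) ^ 2 * (s * t₁ + 2) :=
    mul_nonneg (sq_nonneg _) (by positivity)
  have hB : 0 < (s * t₂ - 2) * (s * t₂ + 1) ^ 2 :=
    mul_pos (by linarith) (by positivity)
  have e3 : s ^ 3 = 3 * s := by nlinarith
  nlinarith [hA, hB, e3]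
end

section
/- Define p : ℝ → ℝ by p(t) = 2 t³ e^{−t²/2} (t⁴ − 5t² + 2). Then p is negative and strictly monotonically decreasing on the interval [1, 2√3/3]. -/
/-- The function `p(t) = 2t³ e^{-t²/2} (t⁴ - 5t² + 2)` is negative and strictly
decreasing on `[1, 2√3/3]`. -/
theorem p_neg_and_strictAnti :
    (∀ t ∈ Set.Icc (1 : ℝ) (2 * Real.sqrt 3 / 3),
        2 * t ^ 3 * Real.exp (-t ^ 2 / 2) * (t ^ 4 - 5 * t ^ 2 + 2) < 0) ∧
      StrictAntiOn (fun t : ℝ => 2 * t ^ 3 * Real.exp (-t ^ 2 / 2) * (t ^ 4 - 5 * t ^ 2 + 2))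
        (Set.Icc 1 (2 * Real.sqrt 3 / 3)) := by
  have hs3 : Real.sqrt 3 ^ 2 = 3 := Real.sq_sqrt (by norm_num)
  have hs3pos : 0 < Real.sqrt 3 := Real.sqrt_pos.2 (by norm_num)
  have hb2 : (2 * Real.sqrt 3 / 3) ^ 2 = 4 / 3 := by
    rw [div_pow, mul_pow, hs3]; norm_num
  have key : ∀ t : ℝ, 1 ≤ t → t ≤ 2 * Real.sqrt 3 / 3 → t ^ 2 ≤ 4 / 3 := by
    intro t h1 h2
    calc t ^ 2 ≤ (2 * Real.sqrt 3 / 3) ^ 2 := by nlinarith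
    _ = 4 / 3 := hb2
  constructor
  · rintro t ⟨h1, h2⟩
    have ht2 := key t h1 h2
    have hq : t ^ 4 - 5 * t ^ 2 + 2 < 0 := by nlinarith
    have hpos : 0 < 2 * t ^ 3 * Real.exp (-t ^ 2 / 2) := by positivity
    exact mul_neg_of_pos_of_neg hpos hq
  · have hderiv : ∀ t : ℝ, HasDerivAt (fun t : ℝ => 2 * t ^ 3 * Real.exp (-t ^ 2 / 2) * (t ^ 4 - 5 * t ^ 2 + 2))
        (2 * Real.exp (-t ^ 2 / 2) * (-t ^ 8 + 12 * t ^ 6 - 27 * t ^ 4 + 6 * t ^ 2)) t := by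
      intro t
      have he : HasDerivAt (fun t : ℝ => Real.exp (-t ^ 2 / 2))
          (Real.exp (-t ^ 2 / 2) * (-(↑(2:ℕ) * t ^ (2 - 1)) / 2)) t :=
        ((hasDerivAt_pow 2 t).neg.div_const 2).exp
      have h1 : HasDerivAt (fun t : ℝ => 2 * t ^ 3) (2 * (↑(3:ℕ) * t ^ (3 - 1))) t :=
        (hasDerivAt_pow 3 t).const_mul 2
      have h2 : HasDerivAt (fun t : ℝ => t ^ 4 - 5 * t ^ 2 + 2)
          ((↑(4:ℕ) * t ^ (4 - 1) - 5 * (↑(2:ℕ) * t ^ (2 - 1))) + 0) t :=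
        (((hasDerivAt_pow 4 t).sub ((hasDerivAt_pow 2 t).const_mul 5)).add (hasDerivAt_const t 2))
      have := (h1.mul he).mul h2
      refine this.congr_deriv ?_
      simp only [Pi.mul_apply]
      push_cast
      ring
    apply strictAntiOn_of_deriv_neg (convex_Icc _ _)
    · apply Continuous.continuousOn
      continuity
    · intro t ht
      rw [interior_Icc] at ht
      obtain ⟨h1, h2⟩ := ht
      rw [(hderiv t).deriv]
      have ht2 : t ^ 2 ≤ 4 / 3 := key t h1.le h2.le
      have hexp : 0 < Real.exp (-t ^ 2 / 2) := Real.exp_pos _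
      have hpoly : -t ^ 8 + 12 * t ^ 6 - 27 * t ^ 4 + 6 * t ^ 2 < 0 := by
        nlinarith [sq_nonneg t, mul_le_mul_of_nonneg_left ht2 (sq_nonneg t),
          mul_le_mul_of_nonneg_left ht2 (mul_nonneg (sq_nonneg t) (sq_nonneg t)),
          sq_nonneg (t^2 - 1), sq_nonneg (t^3 - t), h1]
      nlinarith [mul_pos (mul_pos (by norm_num : (0:ℝ) < 2) hexp) (neg_pos.2 hpoly)]
end

section
/- Let f(t) = t e^{−t²/2} and g(t) = t²(1 − t²) e^{−t²/2}. If 0 < t₁ < 1 < t₂ ≤ 2√3/3 and f(t₁) = f(t₂), then g(t₁)² < g(t₂)². -/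
open Real Set

private lemma hasDerivAt_D1 (x : ℝ) :
    HasDerivAt (fun s : ℝ => Real.exp s * (s^2/2 + 3*s/2 - 3/2) + 3/2)
      (Real.exp x * (x^2/2 + 5*x/2)) x := by
  have hpoly : HasDerivAt (fun s : ℝ => s^2/2 + 3*s/2 - 3/2) (x + 3/2) x := by
    have h := (((hasDerivAt_pow 2 x).div_const 2).add
      (((hasDerivAt_id x).const_mul (3:ℝ)).div_const 2)).sub_const (3/2 : ℝ)
    refine h.congr_deriv ?_
    push_cast; ring
  have h := ((Real.hasDerivAt_exp x).mul hpoly).add_const (3/2 : ℝ)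
  refine h.congr_deriv ?_
  ring

private lemma D1_pos {s : ℝ} (hs : 0 < s) :
    0 < Real.exp s * (s^2/2 + 3*s/2 - 3/2) + 3/2 := by
  have mono : StrictMonoOn (fun s : ℝ => Real.exp s * (s^2/2 + 3*s/2 - 3/2) + 3/2)
      (Set.Ici (0:ℝ)) := by
    apply strictMonoOn_of_deriv_pos (convex_Ici 0)
    · fun_prop
    · intro x hx
      rw [interior_Ici] at hx
      rw [(hasDerivAt_D1 x).deriv]
      have : (0:ℝ) < x^2/2 + 5*x/2 := by nlinarith [hx.out]
      positivity
  have h0 : (fun s : ℝ => Real.exp s * (s^2/2 + 3*s/2 - 3/2) + 3/2) 0 = 0 := by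
    simp
  have := mono (Set.self_mem_Ici) (Set.mem_Ici.mpr hs.le) hs
  rw [h0] at this
  exact this

private lemma hasDerivAt_D (x : ℝ) :
    HasDerivAt (fun s : ℝ => Real.exp s * (s^2/2 + s/2 - 2) + 2 + 3*s/2)
      (Real.exp x * (x^2/2 + 3*x/2 - 3/2) + 3/2) x := by
  have hpoly : HasDerivAt (fun s : ℝ => s^2/2 + s/2 - 2) (x + 1/2) x := by
    have h := (((hasDerivAt_pow 2 x).div_const 2).add
      ((hasDerivAt_id x).div_const 2)).sub_const (2 : ℝ)
    refine h.congr_deriv ?_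
    push_cast; ring
  have hlin : HasDerivAt (fun s : ℝ => 3*s/2) (3/2 : ℝ) x := by
    have h := ((hasDerivAt_id x).const_mul (3:ℝ)).div_const 2
    refine h.congr_deriv ?_
    norm_num
  have h := (((Real.hasDerivAt_exp x).mul hpoly).add_const (2 : ℝ)).add hlin
  refine h.congr_deriv ?_
  ring

private lemma D_pos {s : ℝ} (hs : 0 < s) :
    0 < Real.exp s * (s^2/2 + s/2 - 2) + 2 + 3*s/2 := by
  have mono : StrictMonoOn (fun s : ℝ => Real.exp s * (s^2/2 + s/2 - 2) + 2 + 3*s/2)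
      (Set.Ici (0:ℝ)) := by
    apply strictMonoOn_of_deriv_pos (convex_Ici 0)
    · fun_prop
    · intro x hx
      rw [interior_Ici] at hx
      rw [(hasDerivAt_D x).deriv]
      exact D1_pos hx.out
  have h0 : (fun s : ℝ => Real.exp s * (s^2/2 + s/2 - 2) + 2 + 3*s/2) 0 = 0 := by
    simp
  have := mono (Set.self_mem_Ici) (Set.mem_Ici.mpr hs.le) hs
  rw [h0] at this
  exact this

/-- Key: if `0 < u < v` and `u e^v = v e^u` then `u(1-u)² < v(1-v)²`. -/
private lemma key_ineq {u v : ℝ} (hu : 0 < u) (huv : u < v)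
    (hc : u * Real.exp v = v * Real.exp u) : u * (1-u)^2 < v * (1-v)^2 := by
  set s : ℝ := v - u with hsdef
  have hs : 0 < s := by simp [hsdef]; linarith
  set E : ℝ := Real.exp s with hEdef
  have hEv : Real.exp v = Real.exp u * E := by
    rw [hEdef, ← Real.exp_add]; rw [hsdef]; ring_nf
  have hvE : v = u * E := by
    have hepos : (0:ℝ) < Real.exp u := Real.exp_pos u
    have : u * (Real.exp u * E) = v * Real.exp u := by rw [← hEv]; exact hc
    field_simp at this
    nlinarith [this]
  have hsE : u * (E - 1) = s := by rw [hsdef]; nlinarith [hvE]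
  have hE1 : s + 1 < E := by
    rw [hEdef]; exact Real.add_one_lt_exp hs.ne'
  have hE0 : (0:ℝ) < E := Real.exp_pos s
  have hE2 : 0 < s * E - E + 1 := by
    have h := Real.add_one_lt_exp (neg_ne_zero.mpr hs.ne' : -s ≠ 0)
    rw [Real.exp_neg, ← hEdef] at h
    have : (1 - s) * E < 1 := by
      calc (1 - s) * E = (-s + 1) * E := by ring
      _ < E⁻¹ * E := by
        apply mul_lt_mul_of_pos_right h hE0
      _ = 1 := inv_mul_cancel₀ hE0.ne'
    nlinarith
  set B : ℝ := Real.exp (s/2) with hBdef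
  have hB2 : B^2 = E := by
    rw [hBdef, hEdef, sq, ← Real.exp_add]; congr 1; ring
  have hB1 : s/2 + 1 < B := by
    rw [hBdef]; exact Real.add_one_lt_exp (by positivity : (0:ℝ) < s/2).ne'
  have hD := D_pos hs
  rw [← hEdef] at hD
  clear_value s E B
  -- E - 1 - s < B * (s*E - E + 1)
  have hkey : E - 1 - s < B * (s*E - E + 1) := by
    have hm := mul_lt_mul_of_pos_right hB1 hE2
    nlinarith [hm, hD]
  have hEs : 0 < E - 1 - s := by linarith
  have hsq : (E - 1 - s)^2 < E * (s*E - E + 1)^2 := by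
    have := mul_self_lt_mul_self hEs.le hkey
    calc (E - 1 - s)^2 = (E-1-s) * (E-1-s) := sq (E-1-s) ▸ by ring
    _ < (B * (s*E - E + 1)) * (B * (s*E - E + 1)) := this
    _ = B^2 * (s*E-E+1)^2 := by ring
    _ = E * (s*E-E+1)^2 := by rw [hB2]
  have main : s * (E - 1 - s)^2 < s * (E * (s*E - E + 1)^2) :=
    mul_lt_mul_of_pos_left hsq hs
  have hEm1 : (0:ℝ) < E - 1 := by linarith
  have goal3 : u * (1-u)^2 * (E-1)^3 < v * (1-v)^2 * (E-1)^3 := by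
    have e1 : u * (1-u)^2 * (E-1)^3 = s * (E - 1 - s)^2 := by
      rw [← hsE]; ring
    have e2 : v * (1-v)^2 * (E-1)^3 = s * (E * (s*E - E + 1)^2) := by
      rw [← hsE, hvE]; ring
    rw [e1, e2]; exact main
  exact (mul_lt_mul_iff_of_pos_right (by positivity : (0:ℝ) < (E-1)^3)).mp goal3

/-- With `f(t) = t e^{-t²/2}` and `g(t) = t²(1-t²)e^{-t²/2}`: if `0 < t₁ < 1 < t₂ ≤ 2√3/3`
and `f(t₁) = f(t₂)`, then `g(t₁)² < g(t₂)²`. -/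
theorem g_sq_lt (t₁ t₂ : ℝ) (h1 : 0 < t₁) (h2 : t₁ < 1) (h3 : 1 < t₂)
    (h4 : t₂ ≤ 2 * Real.sqrt 3 / 3)
    (heq : t₁ * Real.exp (-t₁ ^ 2 / 2) = t₂ * Real.exp (-t₂ ^ 2 / 2)) :
    (t₁ ^ 2 * (1 - t₁ ^ 2) * Real.exp (-t₁ ^ 2 / 2)) ^ 2 <
      (t₂ ^ 2 * (1 - t₂ ^ 2) * Real.exp (-t₂ ^ 2 / 2)) ^ 2 := by
  set u : ℝ := t₁ ^ 2 with hudef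
  set v : ℝ := t₂ ^ 2 with hvdef
  have hu : 0 < u := by positivity
  have hu1 : u < 1 := by nlinarith
  have hv1 : 1 < v := by nlinarith
  have huv : u < v := by linarith
  have hA2 : Real.exp (-u/2) ^ 2 = Real.exp (-u) := by
    rw [sq, ← Real.exp_add]; congr 1; ring
  have hB2 : Real.exp (-v/2) ^ 2 = Real.exp (-v) := by
    rw [sq, ← Real.exp_add]; congr 1; ring
  have hsqeq : u * Real.exp (-u) = v * Real.exp (-v) := by
    have h := congrArg (fun x => x^2) heq
    simp only [mul_pow] at h
    rw [hA2, hB2] at h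
    simpa [hudef, hvdef] using h
  have hc : u * Real.exp v = v * Real.exp u := by
    have h1 := mul_pos (Real.exp_pos u) (Real.exp_pos v)
    have e1 : Real.exp (-u) = (Real.exp u)⁻¹ := Real.exp_neg u
    have e2 : Real.exp (-v) = (Real.exp v)⁻¹ := Real.exp_neg v
    rw [e1, e2] at hsqeq
    field_simp at hsqeq
    linarith [hsqeq]
  have key := key_ineq hu huv hc
  -- goal in terms of u, v
  have hgoal : u^2 * (1-u)^2 * Real.exp (-u) < v^2 * (1-v)^2 * Real.exp (-v) := by
    have cpos : 0 < u * Real.exp (-u) := by positivity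
    have h := mul_lt_mul_of_pos_right key cpos
    calc u^2 * (1-u)^2 * Real.exp (-u) = u * (1-u)^2 * (u * Real.exp (-u)) := by ring
    _ < v * (1-v)^2 * (u * Real.exp (-u)) := h
    _ = v * (1-v)^2 * (v * Real.exp (-v)) := by rw [hsqeq]
    _ = v^2 * (1-v)^2 * Real.exp (-v) := by ring
  calc (u * (1 - u) * Real.exp (-u / 2)) ^ 2
      = u^2 * (1-u)^2 * Real.exp (-u/2)^2 := by ring
    _ = u^2 * (1-u)^2 * Real.exp (-u) := by rw [hA2]
    _ < v^2 * (1-v)^2 * Real.exp (-v) := hgoal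
    _ = v^2 * (1-v)^2 * Real.exp (-v/2)^2 := by rw [hB2]
    _ = (v * (1 - v) * Real.exp (-v / 2)) ^ 2 := by ring
end

section
/- There is no pair (t₁, t₂) of real numbers with 0 < t₁ < 1 < t₂ such that both t₁ e^{−t₁²/2} = t₂ e^{−t₂²/2} and t₁²(1 − t₁²) e^{−t₁²/2} + t₂²(1 − t₂²) e^{−t₂²/2} = 0. -/
open Real

lemma aux_exp_ineq : ∀ x : ℝ, 0 < x → 2 * Real.exp x - 2 < x * (Real.exp x + 1) := by
  intro x hx
  set F : ℝ → ℝ := fun y => y * (Real.exp y + 1) - 2 * Real.exp y + 2 with hF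
  have hderiv : ∀ y : ℝ, HasDerivAt F ((y - 1) * Real.exp y + 1) y := by
    intro y
    have h1 : HasDerivAt (fun y : ℝ => y * (Real.exp y + 1))
        (1 * (Real.exp y + 1) + y * Real.exp y) y :=
      (hasDerivAt_id y).mul ((Real.hasDerivAt_exp y).add_const 1)
    have h2 : HasDerivAt (fun y : ℝ => 2 * Real.exp y) (2 * Real.exp y) y :=
      (Real.hasDerivAt_exp y).const_mul 2
    have := (h1.sub h2).add_const 2
    refine this.congr_deriv ?_
    ring
  have hpos : ∀ y ∈ interior (Set.Ici (0:ℝ)), 0 < (y - 1) * Real.exp y + 1 := by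
    intro y hy
    rw [interior_Ici] at hy
    have hy' : (0:ℝ) < y := hy
    have h1 : 1 - y < Real.exp (-y) := by
      have := Real.add_one_lt_exp (x := -y) (by linarith)
      linarith
    have h2 : Real.exp (-y) * Real.exp y = 1 := by
      rw [← Real.exp_add]; simp
    have h3 : (1 - y) * Real.exp y < 1 := by
      calc (1 - y) * Real.exp y < Real.exp (-y) * Real.exp y :=
            mul_lt_mul_of_pos_right h1 (Real.exp_pos y)
        _ = 1 := h2
    nlinarith
  have hmono : StrictMonoOn F (Set.Ici (0:ℝ)) := by
    apply strictMonoOn_of_deriv_pos (convex_Ici 0)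
    · exact Continuous.continuousOn (by continuity)
    · intro y hy
      rw [(hderiv y).deriv]
      exact hpos y hy
  have h0 : F 0 < F x := hmono (Set.self_mem_Ici) (Set.mem_Ici.mpr hx.le) hx
  simp only [hF] at h0
  simp only [Real.exp_zero] at h0
  linarith

lemma aux_log_ineq : ∀ u : ℝ, 1 < u → 2 * (u - 1) / (u + 1) < Real.log u := by
  intro u hu
  have hu0 : (0:ℝ) < u := by linarith
  have hx : 0 < Real.log u := Real.log_pos hu
  have hexp : Real.exp (Real.log u) = u := Real.exp_log hu0
  have := aux_exp_ineq (Real.log u) hx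
  rw [hexp] at this
  rw [div_lt_iff₀ (by linarith : (0:ℝ) < u + 1)]
  linarith

/-- There is no pair `0 < t₁ < 1 < t₂` with `t₁ e^{-t₁²/2} = t₂ e^{-t₂²/2}` and
`t₁²(1-t₁²)e^{-t₁²/2} + t₂²(1-t₂²)e^{-t₂²/2} = 0`. -/
theorem no_critical_point :
    ¬ ∃ t₁ t₂ : ℝ, 0 < t₁ ∧ t₁ < 1 ∧ 1 < t₂ ∧
      t₁ * Real.exp (-t₁ ^ 2 / 2) = t₂ * Real.exp (-t₂ ^ 2 / 2) ∧
      t₁ ^ 2 * (1 - t₁ ^ 2) * Real.exp (-t₁ ^ 2 / 2) +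
        t₂ ^ 2 * (1 - t₂ ^ 2) * Real.exp (-t₂ ^ 2 / 2) = 0 := by
  rintro ⟨t₁, t₂, ht₁, ht₁1, ht₂, heq1, heq2⟩
  have ht₂0 : (0:ℝ) < t₂ := by linarith
  have hE₁ : (0:ℝ) < Real.exp (-t₁ ^ 2 / 2) := Real.exp_pos _
  have hE₂ : (0:ℝ) < Real.exp (-t₂ ^ 2 / 2) := Real.exp_pos _
  set E₁ := Real.exp (-t₁ ^ 2 / 2)
  set E₂ := Real.exp (-t₂ ^ 2 / 2)
  -- derive t₁ + t₂ = t₁³ + t₂³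
  have hfac : (t₁ * E₁) * (t₁ * (1 - t₁ ^ 2) + t₂ * (1 - t₂ ^ 2)) = 0 := by
    have : t₁ ^ 2 * (1 - t₁ ^ 2) * E₁ + t₂ * (1 - t₂ ^ 2) * (t₂ * E₂) = 0 := by
      linarith [heq2, (by ring : t₂ ^ 2 * (1 - t₂ ^ 2) * E₂ = t₂ * (1 - t₂ ^ 2) * (t₂ * E₂))]
    rw [← heq1] at this
    nlinarith [this]
  have hc : (0:ℝ) < t₁ * E₁ := mul_pos ht₁ hE₁
  have hsum : t₁ * (1 - t₁ ^ 2) + t₂ * (1 - t₂ ^ 2) = 0 := by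
    rcases mul_eq_zero.mp hfac with h | h
    · exact absurd h hc.ne'
    · exact h
  -- t₁² - t₁t₂ + t₂² = 1
  have hconstr : t₁ ^ 2 - t₁ * t₂ + t₂ ^ 2 = 1 := by
    have hts : (0:ℝ) < t₁ + t₂ := by linarith
    have : (t₁ + t₂) * (t₁ ^ 2 - t₁ * t₂ + t₂ ^ 2 - 1) = 0 := by nlinarith [hsum]
    have := mul_eq_zero.mp this
    rcases this with h | h
    · exact absurd h hts.ne'
    · linarith
  have hprod : t₁ * t₂ ≤ 1 := by nlinarith [sq_nonneg (t₁ - t₂)]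
  -- logs
  have hlog : Real.log t₂ - Real.log t₁ = (t₂ ^ 2 - t₁ ^ 2) / 2 := by
    have := congrArg Real.log heq1
    rw [Real.log_mul ht₁.ne' hE₁.ne', Real.log_mul ht₂0.ne' hE₂.ne',
      Real.log_exp, Real.log_exp] at this
    linarith
  have hu : 1 < t₂ / t₁ := (one_lt_div ht₁).mpr (by linarith)
  have hineq := aux_log_ineq (t₂ / t₁) hu
  rw [Real.log_div ht₂0.ne' ht₁.ne'] at hineq
  have hrw : 2 * (t₂ / t₁ - 1) / (t₂ / t₁ + 1) = 2 * (t₂ - t₁) / (t₂ + t₁) := by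
    rw [div_eq_div_iff (by positivity) (by positivity)]
    field_simp
  rw [hrw, hlog] at hineq
  -- hineq : 2 * (t₂ - t₁) / (t₂ + t₁) < (t₂ ^ 2 - t₁ ^ 2) / 2
  rw [div_lt_div_iff₀ (by linarith) (by norm_num)] at hineq
  nlinarith [hineq, hprod, sq_nonneg (t₁ + t₂)]
end

section
/- Let I₂ = {(t₁, t₂) ∈ (0,1) × (1,∞) : t₁ e^{−t₁²/2} = t₂ e^{−t₂²/2}}. Then 1/t₁ + 1/t₂ > 2 for every (t₁, t₂) ∈ I₂, and the infimum of 1/t₁ + 1/t₂ over I₂ equals 2. -/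
open Real Set

/-- For `x > 1`, `log x < (x - x⁻¹)/2`  (geometric mean < logarithmic mean). -/
lemma lemA {x : ℝ} (hx : 1 < x) : Real.log x < (x - x⁻¹) / 2 := by
  have hmono : StrictMonoOn (fun y : ℝ => (y - y⁻¹) / 2 - Real.log y) (Set.Ici 1) := by
    apply strictMonoOn_of_deriv_pos (convex_Ici 1)
    · apply ContinuousOn.sub
      · apply ContinuousOn.div_const
        exact continuousOn_id.sub (continuousOn_id.inv₀ (fun y hy => by
          have : (1:ℝ) ≤ y := hy
          positivity))
      · apply Real.continuousOn_log.mono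
        intro y hy
        have : (1:ℝ) ≤ y := hy
        simp only [Set.mem_compl_iff, Set.mem_singleton_iff]
        intro h; rw [h] at this; linarith
    · intro y hy
      rw [interior_Ici] at hy
      have hy1 : (1:ℝ) < y := hy
      have hy0 : y ≠ 0 := by linarith
      have hd : HasDerivAt (fun y : ℝ => (y - y⁻¹) / 2 - Real.log y)
          ((1 - -(y ^ 2)⁻¹) / 2 - y⁻¹) y :=
        (((hasDerivAt_id y).sub (hasDerivAt_inv hy0)).div_const 2).sub
          (Real.hasDerivAt_log hy0)
      rw [hd.deriv]
      have hyi : y⁻¹ < 1 := by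
        rw [inv_lt_one_iff₀]; right; exact hy1
      have h2 : (1 - -(y ^ 2)⁻¹) / 2 - y⁻¹ = (1 - y⁻¹) ^ 2 / 2 := by
        have : (y ^ 2)⁻¹ = y⁻¹ ^ 2 := by rw [inv_pow]
        rw [this]; ring
      rw [h2]
      have : 1 - y⁻¹ > 0 := by linarith
      positivity
  have h := hmono (Set.self_mem_Ici) (show x ∈ Set.Ici (1:ℝ) from hx.le) hx
  simp only [Real.log_one, inv_one] at h
  norm_num at h
  linarith

/-- For `x > 1`, `2*(x-1)/(x+1) < log x`  (logarithmic mean < arithmetic mean). -/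
lemma lemB {x : ℝ} (hx : 1 < x) : 2 * (x - 1) / (x + 1) < Real.log x := by
  have hmono : StrictMonoOn (fun y : ℝ => Real.log y - 2 * (y - 1) / (y + 1)) (Set.Ici 1) := by
    apply strictMonoOn_of_deriv_pos (convex_Ici 1)
    · apply ContinuousOn.sub
      · apply Real.continuousOn_log.mono
        intro y hy
        have : (1:ℝ) ≤ y := hy
        simp only [Set.mem_compl_iff, Set.mem_singleton_iff]
        intro h; rw [h] at this; linarith
      · apply ContinuousOn.div
        · fun_prop
        · fun_prop
        · intro y hy
          have : (1:ℝ) ≤ y := hy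
          intro h; linarith [h]
    · intro y hy
      rw [interior_Ici] at hy
      have hy1 : (1:ℝ) < y := hy
      have hy0 : y ≠ 0 := by linarith
      have hy1' : y + 1 ≠ 0 := by intro h; linarith
      have hd : HasDerivAt (fun y : ℝ => Real.log y - 2 * (y - 1) / (y + 1))
          (y⁻¹ - 2 * ((1 * (y + 1) - (y - 1) * 1) / (y + 1) ^ 2)) y := by
        have h1 : HasDerivAt (fun y : ℝ => (y - 1) / (y + 1))
            ((1 * (y + 1) - (y - 1) * 1) / (y + 1) ^ 2) y :=
          ((hasDerivAt_id y).sub_const 1).div ((hasDerivAt_id y).add_const 1) hy1'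
        have h2 := (Real.hasDerivAt_log hy0).sub (h1.const_mul 2)
        refine h2.congr_of_eventuallyEq (Filter.Eventually.of_forall fun z => ?_)
        simp only [Pi.sub_apply]
        ring
      rw [hd.deriv]
      have key : y⁻¹ - 2 * ((1 * (y + 1) - (y - 1) * 1) / (y + 1) ^ 2)
          = (y - 1) ^ 2 / (y * (y + 1) ^ 2) := by
        field_simp
        ring
      rw [key]
      have h1 : (0:ℝ) < y - 1 := by linarith
      positivity
  have h := hmono (Set.self_mem_Ici) (show x ∈ Set.Ici (1:ℝ) from hx.le) hx
  simp only [Real.log_one] at h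
  norm_num at h
  linarith

/-- Taking logs of the curve equation. -/
lemma log_rel {a b : ℝ} (ha : 0 < a) (hb : 0 < b)
    (h : a * Real.exp (-a ^ 2 / 2) = b * Real.exp (-b ^ 2 / 2)) :
    Real.log b - Real.log a = (b ^ 2 - a ^ 2) / 2 := by
  have h2 : Real.exp (Real.log a + -a ^ 2 / 2) = Real.exp (Real.log b + -b ^ 2 / 2) := by
    rw [Real.exp_add, Real.exp_add, Real.exp_log ha, Real.exp_log hb, h]
  have h3 := Real.exp_injective h2
  linarith

lemma main_ineq {a b : ℝ} (ha : a ∈ Set.Ioo (0:ℝ) 1) (hb : b ∈ Set.Ioi (1:ℝ))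
    (h : a * Real.exp (-a ^ 2 / 2) = b * Real.exp (-b ^ 2 / 2)) :
    2 < 1 / a + 1 / b := by
  obtain ⟨ha0, ha1⟩ := ha
  have hb1 : 1 < b := hb
  have hb0 : 0 < b := by linarith
  have hab : a < b := by linarith
  have hx : 1 < b / a := (one_lt_div ha0).mpr hab
  have hlog := log_rel ha0 hb0 h
  have hlogdiv : Real.log (b / a) = (b ^ 2 - a ^ 2) / 2 := by
    rw [Real.log_div hb0.ne' ha0.ne']; exact hlog
  have hsq : 0 < b ^ 2 - a ^ 2 := by nlinarith
  -- From lemA: a*b < 1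
  have hA := lemA hx
  rw [hlogdiv] at hA
  have hinv : (b / a)⁻¹ = a / b := by rw [inv_div]
  rw [hinv] at hA
  have hA' : b / a - a / b = (b ^ 2 - a ^ 2) / (a * b) := by
    field_simp
  rw [hA'] at hA
  have habpos : 0 < a * b := mul_pos ha0 hb0
  have hprod : a * b < 1 := by
    have h5 : b ^ 2 - a ^ 2 < (b ^ 2 - a ^ 2) / (a * b) := by linarith
    rw [lt_div_iff₀ habpos] at h5
    nlinarith
  -- From lemB: 2 < a + b
  have hB := lemB hx
  rw [hlogdiv] at hB
  have hB' : 2 * (b / a - 1) / (b / a + 1) = 2 * (b - a) / (a + b) := by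
    have hba0 : b / a + 1 ≠ 0 := by positivity
    have hab0 : a + b ≠ 0 := by positivity
    field_simp
    ring_nf
  rw [hB'] at hB
  have hsum : 2 < a + b := by
    have habp : 0 < a + b := by linarith
    rw [div_lt_div_iff₀ habp (by norm_num : (0:ℝ) < 2)] at hB
    nlinarith
  have : 1 / a + 1 / b = (a + b) / (a * b) := by field_simp; ring
  rw [this, lt_div_iff₀ habpos]
  nlinarith

/-- Existence of the partner point by IVT. -/
lemma exists_t2 {a : ℝ} (ha : a ∈ Set.Ioo (0:ℝ) 1) :
    ∃ b ∈ Set.Ioo (1:ℝ) a⁻¹, a * Real.exp (-a ^ 2 / 2) = b * Real.exp (-b ^ 2 / 2) := by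
  obtain ⟨ha0, ha1⟩ := ha
  set f : ℝ → ℝ := fun t => t * Real.exp (-t ^ 2 / 2) with hf
  have hcont : ContinuousOn f (Set.Icc 1 a⁻¹) := by fun_prop
  have hai : 1 < a⁻¹ := (one_lt_inv₀ ha0).mpr ha1
  -- f a < f 1
  have h1 : f a < f 1 := by
    show a * Real.exp (-a ^ 2 / 2) < 1 * Real.exp (-1 ^ 2 / 2)
    rw [one_mul]
    have : a * Real.exp (-a ^ 2 / 2) = Real.exp (Real.log a + -a ^ 2 / 2) := by
      rw [Real.exp_add, Real.exp_log ha0]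
    rw [this]
    apply Real.exp_lt_exp.mpr
    have hla := Real.log_lt_sub_one_of_pos ha0 (ne_of_lt ha1)
    nlinarith [sq_nonneg (a - 1)]
  -- f a⁻¹ < f a
  have h2 : f a⁻¹ < f a := by
    show a⁻¹ * Real.exp (-(a⁻¹) ^ 2 / 2) < a * Real.exp (-a ^ 2 / 2)
    have e1 : a⁻¹ * Real.exp (-(a⁻¹) ^ 2 / 2) = Real.exp (Real.log a⁻¹ + -(a⁻¹) ^ 2 / 2) := by
      rw [Real.exp_add, Real.exp_log (by positivity)]
    have e2 : a * Real.exp (-a ^ 2 / 2) = Real.exp (Real.log a + -a ^ 2 / 2) := by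
      rw [Real.exp_add, Real.exp_log ha0]
    rw [e1, e2]
    apply Real.exp_lt_exp.mpr
    have hx2 : 1 < (a⁻¹) ^ 2 := by nlinarith
    have hA := lemA hx2
    have hi : ((a⁻¹ : ℝ) ^ 2)⁻¹ = a ^ 2 := by
      rw [← inv_pow, inv_inv]
    rw [hi] at hA
    have hlp : Real.log ((a⁻¹) ^ 2) = -2 * Real.log a := by
      rw [Real.log_pow, Real.log_inv]; push_cast; ring
    rw [hlp] at hA
    linarith [Real.log_inv a]
  have := intermediate_value_Ioo' hai.le hcont (Set.mem_Ioo.mpr ⟨h2, h1⟩)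
  obtain ⟨b, hbmem, hbeq⟩ := this
  exact ⟨b, hbmem, hbeq.symm⟩

/-- On the curve `I₂ = {(t₁,t₂) ∈ (0,1)×(1,∞) : t₁ e^{-t₁²/2} = t₂ e^{-t₂²/2}}`,
one has `1/t₁ + 1/t₂ > 2`, and the infimum of `1/t₁ + 1/t₂` over `I₂` equals `2`. -/
theorem inf_on_I2 :
    (∀ t₁ t₂ : ℝ, t₁ ∈ Set.Ioo (0 : ℝ) 1 → t₂ ∈ Set.Ioi (1 : ℝ) →
        t₁ * Real.exp (-t₁ ^ 2 / 2) = t₂ * Real.exp (-t₂ ^ 2 / 2) →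
        2 < 1 / t₁ + 1 / t₂) ∧
      IsGLB {s : ℝ | ∃ t₁ t₂ : ℝ, t₁ ∈ Set.Ioo (0 : ℝ) 1 ∧ t₂ ∈ Set.Ioi (1 : ℝ) ∧
        t₁ * Real.exp (-t₁ ^ 2 / 2) = t₂ * Real.exp (-t₂ ^ 2 / 2) ∧
        s = 1 / t₁ + 1 / t₂} 2 := by
  constructor
  · intro t₁ t₂ h1 h2 heq
    exact main_ineq h1 h2 heq
  · constructor
    · rintro s ⟨t₁, t₂, h1, h2, heq, rfl⟩
      exact (main_ineq h1 h2 heq).le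
    · intro c hc
      by_contra hlt
      push_neg at hlt
      set a : ℝ := (1 / (c - 1) + 1) / 2 with hadef
      have hc1 : 1 < c - 1 := by linarith
      have hi0 : 0 < 1 / (c - 1) := by positivity
      have hi1 : 1 / (c - 1) < 1 := by
        rw [div_lt_one (by linarith)]; linarith
      have ha : a ∈ Set.Ioo (0 : ℝ) 1 := ⟨by positivity, by rw [hadef]; linarith⟩
      obtain ⟨b, ⟨hb1, hb2⟩, heq⟩ := exists_t2 ha
      have hle := hc ⟨a, b, ha, Set.mem_Ioi.mpr hb1, heq, rfl⟩
      have hagt : 1 / (c - 1) < a := by rw [hadef]; linarith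
      have h1a : 1 / a < c - 1 := by
        have h := one_div_lt_one_div_of_lt hi0 hagt
        rwa [one_div_one_div] at h
      have h1b : 1 / b < 1 := by
        rw [div_lt_one (by linarith)]; linarith
      linarith
end

section
/- Let ω ∈ ℝ and let u : (0,∞) → ℂ be twice continuously differentiable with −u″(x) + ω u(x) − u(x) · Log|u(x)|² = 0 for all x > 0 (where u(x) Log|u(x)|² is interpreted as 0 when u(x) = 0). If u(x) → 0 and u′(x) → 0 as x → ∞, then |u′(x)|² − (ω+1)|u(x)|² + |u(x)|² Log|u(x)|² = 0 for every x > 0. -/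
open Filter Topology

lemma sq_log_sq_bound {t : ℝ} (h0 : 0 ≤ t) (h1 : t ≤ 1) :
    |t ^ 2 * Real.log (t ^ 2)| ≤ 4 * (t * Real.sqrt t) := by
  rcases eq_or_lt_of_le h0 with rfl | ht
  · simp
  · set s := Real.sqrt t with hs
    have hs0 : 0 < s := Real.sqrt_pos.mpr ht
    have hst : s ^ 2 = t := Real.sq_sqrt h0
    have hlog : Real.log (t ^ 2) ≤ 0 := Real.log_nonpos (by positivity) (by nlinarith)
    have habs : |t ^ 2 * Real.log (t ^ 2)| = t ^ 2 * (-Real.log (t ^ 2)) := by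
      rw [abs_of_nonpos (mul_nonpos_of_nonneg_of_nonpos (by positivity) hlog)]; ring
    have hinv : Real.log s⁻¹ ≤ s⁻¹ :=
      le_trans (Real.log_le_sub_one_of_pos (by positivity)) (by linarith [inv_pos.mpr hs0])
    have hlogt2 : Real.log (t ^ 2) = 4 * Real.log s := by
      rw [← hst]; rw [← pow_mul, Real.log_pow]; push_cast; ring
    have hlogsinv : Real.log s⁻¹ = -Real.log s := Real.log_inv s
    have key : -Real.log (t ^ 2) ≤ 4 * s⁻¹ := by
      rw [hlogt2]; linarith [hinv, hlogsinv.symm.le]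
    rw [habs]
    have hts : t * s⁻¹ = s := by
      rw [← hst]; field_simp
    calc t ^ 2 * (-Real.log (t ^ 2)) ≤ t ^ 2 * (4 * s⁻¹) :=
          mul_le_mul_of_nonneg_left key (by positivity)
      _ = 4 * (t * (t * s⁻¹)) := by ring
      _ = 4 * (t * s) := by rw [hts]

/-- First integral of the stationary logarithmic Schrödinger equation on `(0,∞)`:
for a `C²` solution `u` of `-u'' + ωu - u Log|u|² = 0` with `u, u' → 0` at `+∞`,
one has `|u'|² - (ω+1)|u|² + |u|² Log|u|² ≡ 0` on `(0,∞)`. -/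
theorem energy_first_integral (ω : ℝ) (u u' u'' : ℝ → ℂ)
    (hd1 : ∀ x ∈ Set.Ioi (0 : ℝ), HasDerivAt u (u' x) x)
    (hd2 : ∀ x ∈ Set.Ioi (0 : ℝ), HasDerivAt u' (u'' x) x)
    (hc2 : ContinuousOn u'' (Set.Ioi 0))
    (hode : ∀ x ∈ Set.Ioi (0 : ℝ),
      -u'' x + (ω : ℂ) * u x - u x * (Real.log (‖u x‖ ^ 2) : ℂ) = 0)
    (hu0 : Tendsto u atTop (𝓝 0))
    (hu'0 : Tendsto u' atTop (𝓝 0)) :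
    ∀ x ∈ Set.Ioi (0 : ℝ),
      ‖u' x‖ ^ 2 - (ω + 1) * ‖u x‖ ^ 2 + ‖u x‖ ^ 2 * Real.log (‖u x‖ ^ 2) = 0 := by
  have hnorm : ∀ z : ℂ, ‖z‖ ^ 2 = z.re ^ 2 + z.im ^ 2 := by
    intro z
    rw [Complex.sq_norm, Complex.normSq_apply]; ring
  set f : ℝ → ℝ := fun y => (u y).re ^ 2 + (u y).im ^ 2 with hf
  set g : ℝ → ℝ := fun y => (u' y).re ^ 2 + (u' y).im ^ 2 with hg
  set p : ℝ → ℝ := fun y => 2 * ((u y).re * (u' y).re + (u y).im * (u' y).im) with hp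
  set E : ℝ → ℝ := fun y => g y - (ω + 1) * f y + f y * Real.log (f y) with hE
  have hfe : ∀ y, ‖u y‖ ^ 2 = f y := fun y => hnorm (u y)
  have hge : ∀ y, ‖u' y‖ ^ 2 = g y := fun y => hnorm (u' y)
  -- derivatives of components
  have hre : ∀ x ∈ Set.Ioi (0:ℝ), HasDerivAt (fun y => (u y).re) ((u' x).re) x :=
    fun x hx => Complex.reCLM.hasFDerivAt.comp_hasDerivAt x (hd1 x hx)
  have him : ∀ x ∈ Set.Ioi (0:ℝ), HasDerivAt (fun y => (u y).im) ((u' x).im) x :=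
    fun x hx => Complex.imCLM.hasFDerivAt.comp_hasDerivAt x (hd1 x hx)
  have hre' : ∀ x ∈ Set.Ioi (0:ℝ), HasDerivAt (fun y => (u' y).re) ((u'' x).re) x :=
    fun x hx => Complex.reCLM.hasFDerivAt.comp_hasDerivAt x (hd2 x hx)
  have him' : ∀ x ∈ Set.Ioi (0:ℝ), HasDerivAt (fun y => (u' y).im) ((u'' x).im) x :=
    fun x hx => Complex.imCLM.hasFDerivAt.comp_hasDerivAt x (hd2 x hx)
  have hfd : ∀ x ∈ Set.Ioi (0:ℝ), HasDerivAt f (p x) x := by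
    intro x hx
    have := ((hre x hx).pow 2).add ((him x hx).pow 2)
    refine this.congr_deriv ?_
    simp [hp]; ring
  have hgd : ∀ x ∈ Set.Ioi (0:ℝ),
      HasDerivAt g (2 * ((u' x).re * (u'' x).re + (u' x).im * (u'' x).im)) x := by
    intro x hx
    have := ((hre' x hx).pow 2).add ((him' x hx).pow 2)
    refine this.congr_deriv ?_
    ring
  -- ODE in component form
  have hode' : ∀ x ∈ Set.Ioi (0:ℝ),
      (u'' x).re = ω * (u x).re - (u x).re * Real.log (f x) ∧
      (u'' x).im = ω * (u x).im - (u x).im * Real.log (f x) := by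
    intro x hx
    have h := hode x hx
    have h2 : u'' x = (ω : ℂ) * u x - u x * (Real.log (‖u x‖ ^ 2) : ℂ) := by
      linear_combination -h
    rw [hfe x] at h2
    constructor
    · rw [h2]; simp [Complex.mul_re]
    · rw [h2]; simp [Complex.mul_im]
  -- derivative of f * log f
  have hlogd : ∀ x ∈ Set.Ioi (0:ℝ),
      HasDerivAt (fun y => f y * Real.log (f y)) (p x * (Real.log (f x) + 1)) x := by
    intro x hx
    by_cases hfx : f x = 0
    · -- u x = 0, p x = 0
      have hux : u x = 0 := by
        have h1 : (u x).re ^ 2 + (u x).im ^ 2 = 0 := hfx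
        have : (u x).re = 0 ∧ (u x).im = 0 := by
          constructor <;> nlinarith [sq_nonneg (u x).re, sq_nonneg (u x).im]
        exact Complex.ext this.1 this.2
      have hpx : p x = 0 := by simp [hp, hux]
      rw [hasDerivAt_iff_isLittleO]
      have hred : (fun y => f y * Real.log (f y) - f x * Real.log (f x)
          - (y - x) • (p x * (Real.log (f x) + 1))) = fun y => f y * Real.log (f y) := by
        funext y; simp [hfx, hpx]
      rw [hred]
      -- u y = O(y - x), √‖u y‖ = o(1)
      have hcont : ContinuousAt u x := (hd1 x hx).continuousAt
      have hO : (fun y => u y) =O[𝓝 x] fun y => y - x := by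
        have := (hd1 x hx).hasFDerivAt.isBigO_sub
        simpa [hux] using this
      have hnO : (fun y => ‖u y‖) =O[𝓝 x] fun y => y - x := hO.norm_left
      have hsq : Tendsto (fun y => Real.sqrt ‖u y‖) (𝓝 x) (𝓝 0) := by
        have h1 : Tendsto (fun y => ‖u y‖) (𝓝 x) (𝓝 0) := by
          have := hcont.norm.tendsto
          simpa [hux] using this
        have := (Real.continuous_sqrt.tendsto 0).comp h1
        simpa [Function.comp_def] using this
      have hlo : (fun y => Real.sqrt ‖u y‖) =o[𝓝 x] (fun _ => (1:ℝ)) :=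
        (Asymptotics.isLittleO_one_iff ℝ).mpr hsq
      have hmul : (fun y => ‖u y‖ * Real.sqrt ‖u y‖) =o[𝓝 x] fun y => (y - x) * 1 :=
        hnO.mul_isLittleO hlo
      have hsmall : ∀ᶠ y in 𝓝 x, ‖u y‖ < 1 := by
        have h1 : Tendsto (fun y => ‖u y‖) (𝓝 x) (𝓝 0) := by
          have := hcont.norm.tendsto
          simpa [hux] using this
        exact h1.eventually_lt_const one_pos
      have hbig : (fun y => f y * Real.log (f y)) =O[𝓝 x]
          fun y => ‖u y‖ * Real.sqrt ‖u y‖ := by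
        rw [Asymptotics.isBigO_iff]
        refine ⟨4, hsmall.mono fun y hy => ?_⟩
        have h1 : f y = ‖u y‖ ^ 2 := (hfe y).symm
        have h2 := sq_log_sq_bound (norm_nonneg (u y)) hy.le
        rw [Real.norm_eq_abs, Real.norm_eq_abs, h1]
        rw [abs_of_nonneg (mul_nonneg (norm_nonneg _) (Real.sqrt_nonneg _))]
        exact h2
      have := hbig.trans_isLittleO hmul
      simpa using this
    · have h := (Real.hasDerivAt_mul_log hfx).comp x (hfd x hx)
      refine h.congr_deriv ?_
      ring
  -- E has derivative 0 on Ioi 0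
  have hEd : ∀ x ∈ Set.Ioi (0:ℝ), HasDerivAt E 0 x := by
    intro x hx
    have hE' : HasDerivAt E
        (2 * ((u' x).re * (u'' x).re + (u' x).im * (u'' x).im)
          - (ω + 1) * p x + p x * (Real.log (f x) + 1)) x :=
      ((hgd x hx).sub ((hfd x hx).const_mul (ω + 1))).add (hlogd x hx)
    obtain ⟨h1, h2⟩ := hode' x hx
    have hval : 2 * ((u' x).re * (u'' x).re + (u' x).im * (u'' x).im)
          - (ω + 1) * p x + p x * (Real.log (f x) + 1) = 0 := by
      rw [h1, h2]; simp only [hp]; ring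
    rw [hval] at hE'
    exact hE'
  -- E constant
  have hconst : ∀ x ∈ Set.Ioi (0:ℝ), ∀ y, x ≤ y → E y = E x := by
    intro x hx y hxy
    have hsub : Set.Icc x y ⊆ Set.Ioi (0:ℝ) := fun z hz => lt_of_lt_of_le hx hz.1
    have hcont : ContinuousOn E (Set.Icc x y) := fun z hz =>
      ((hEd z (hsub hz)).continuousAt).continuousWithinAt
    have hderiv : ∀ z ∈ Set.Ico x y, HasDerivWithinAt E 0 (Set.Ici z) z := fun z hz =>
      (hEd z (hsub ⟨hz.1, hz.2.le⟩)).hasDerivWithinAt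
    exact constant_of_has_deriv_right_zero hcont hderiv y ⟨hxy, le_refl y⟩
  -- E → 0 at atTop
  have hre0 : Tendsto (fun y => (u y).re) atTop (𝓝 0) := by
    have := (Complex.continuous_re.tendsto 0).comp hu0; simpa [Function.comp_def] using this
  have him0 : Tendsto (fun y => (u y).im) atTop (𝓝 0) := by
    have := (Complex.continuous_im.tendsto 0).comp hu0; simpa [Function.comp_def] using this
  have hf0 : Tendsto f atTop (𝓝 0) := by
    have := ((hre0.pow 2).add (him0.pow 2)); simpa using this
  have hg0 : Tendsto g atTop (𝓝 0) := by
    have h1 : Tendsto (fun y => (u' y).re) atTop (𝓝 0) := by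
      have := (Complex.continuous_re.tendsto 0).comp hu'0; simpa [Function.comp_def] using this
    have h2 : Tendsto (fun y => (u' y).im) atTop (𝓝 0) := by
      have := (Complex.continuous_im.tendsto 0).comp hu'0; simpa [Function.comp_def] using this
    have := ((h1.pow 2).add (h2.pow 2)); simpa using this
  have hnorm0 : Tendsto (fun y => ‖u y‖) atTop (𝓝 0) := by
    have := hu0.norm; simpa using this
  have hflog0 : Tendsto (fun y => f y * Real.log (f y)) atTop (𝓝 0) := by
    apply squeeze_zero_norm' (a := fun y => 4 * (‖u y‖ * Real.sqrt ‖u y‖))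
    · filter_upwards [hnorm0.eventually_lt_const one_pos] with y hy
      have h1 : f y = ‖u y‖ ^ 2 := (hfe y).symm
      rw [Real.norm_eq_abs, h1]
      exact sq_log_sq_bound (norm_nonneg (u y)) hy.le
    · have hsq : Tendsto (fun y => Real.sqrt ‖u y‖) atTop (𝓝 0) := by
        have := (Real.continuous_sqrt.tendsto 0).comp hnorm0; simpa [Function.comp_def] using this
      have := (hnorm0.mul hsq).const_mul 4
      simpa using this
  have hE0 : Tendsto E atTop (𝓝 0) := by
    have := (hg0.sub (hf0.const_mul (ω + 1))).add hflog0
    simpa using this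
  -- conclude
  intro x hx
  have hEx : Tendsto E atTop (𝓝 (E x)) := by
    apply Tendsto.congr' _ tendsto_const_nhds
    filter_upwards [eventually_ge_atTop x] with y hy
    exact (hconst x hx y hy).symm
  have : E x = 0 := tendsto_nhds_unique hEx hE0
  rw [hfe x, hge x]
  exact this
end

section
/- Let ω ∈ ℝ and let u : (0,∞) → ℂ be a nontrivial twice continuously differentiable solution of −u″(x) + ω u(x) − u(x) · Log|u(x)|² = 0 on (0,∞) (with u(x) Log|u(x)|² interpreted as 0 when u(x) = 0), such that u and u′ are square integrable on (0,∞). Then there exist θ ∈ ℝ and c ∈ ℝ such that u(x) = e^{iθ} e^{(ω+1)/2} e^{−(x+c)²/2} for all x > 0. -/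
open Set MeasureTheory

lemma aux_exists_small_value {f : ℝ → ℝ} (hf : MeasureTheory.IntegrableOn f (Set.Ioi 0))
    {ε : ℝ} (hε : 0 < ε) : ∃ y ∈ Set.Ioi (0:ℝ), f y < ε := by
  by_contra h
  push_neg at h
  have h1 := hf.measure_norm_ge_lt_top hε
  have h2 : Set.Ioi (0:ℝ) ⊆ {x | ε ≤ ‖f x‖} := fun y hy => by
    have := h y hy
    simp only [Set.mem_setOf_eq, Real.norm_eq_abs]
    exact this.trans (le_abs_self _)
  have h3 : (MeasureTheory.volume.restrict (Set.Ioi (0:ℝ))) (Set.Ioi 0) ≤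
      (MeasureTheory.volume.restrict (Set.Ioi (0:ℝ))) {x | ε ≤ ‖f x‖} :=
    measure_mono h2
  rw [MeasureTheory.Measure.restrict_apply_self] at h3
  rw [Real.volume_Ioi] at h3
  exact absurd (lt_of_le_of_lt h3 h1) (by simp)

lemma aux_const_Icc {F : Type*} [NormedAddCommGroup F] [NormedSpace ℝ F]
    {f : ℝ → F} {a b : ℝ} (hab : a ≤ b)
    (h : ∀ z ∈ Set.Icc a b, HasDerivAt f 0 z) : f b = f a :=
  constant_of_has_deriv_right_zero
    (fun z hz => (h z hz).continuousAt.continuousWithinAt)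
    (fun z hz => (h z (Set.Ico_subset_Icc_self hz)).hasDerivWithinAt)
    b (Set.right_mem_Icc.2 hab)

lemma aux_const_uIcc {F : Type*} [NormedAddCommGroup F] [NormedSpace ℝ F]
    {f : ℝ → F} {x y : ℝ}
    (h : ∀ z ∈ Set.uIcc x y, HasDerivAt f 0 z) : f x = f y := by
  rcases le_total x y with hxy | hxy
  · rw [Set.uIcc_of_le hxy] at h
    exact (aux_const_Icc hxy h).symm
  · rw [Set.uIcc_of_ge hxy] at h
    exact aux_const_Icc hxy h

lemma aux_neg_log_le {t : ℝ} (h0 : 0 < t) (h1 : t ≤ 1) : -Real.log t ≤ 2 / Real.sqrt t := by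
  have hs : 0 < Real.sqrt t := Real.sqrt_pos.2 h0
  have h2 : Real.log t = 2 * Real.log (Real.sqrt t) := by
    rw [Real.log_sqrt h0.le]; ring
  have h3 : Real.log (Real.sqrt t)⁻¹ ≤ (Real.sqrt t)⁻¹ - 1 :=
    Real.log_le_sub_one_of_pos (by positivity)
  rw [Real.log_inv] at h3
  have : -Real.log (Real.sqrt t) ≤ (Real.sqrt t)⁻¹ := by linarith
  rw [h2]
  rw [div_eq_mul_inv]
  nlinarith [hs]

lemma aux_mul_log_bound {t : ℝ} (h0 : 0 ≤ t) (h1 : t ≤ 1) :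
    |t * Real.log t| ≤ 4 * Real.sqrt t * Real.sqrt (Real.sqrt t) := by
  rcases eq_or_lt_of_le h0 with rfl | ht
  · simp
  · have hr0 : 0 < Real.sqrt t := Real.sqrt_pos.2 ht
    have hr1 : Real.sqrt t ≤ 1 := by
      rw [show (1:ℝ) = Real.sqrt 1 by simp]; exact Real.sqrt_le_sqrt h1
    have hs0 : 0 < Real.sqrt (Real.sqrt t) := Real.sqrt_pos.2 hr0
    have hlog : -Real.log (Real.sqrt t) ≤ 2 / Real.sqrt (Real.sqrt t) :=
      aux_neg_log_le hr0 hr1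
    have hlt : Real.log t ≤ 0 := Real.log_nonpos h0 h1
    have h2 : Real.log t = 2 * Real.log (Real.sqrt t) := by
      rw [Real.log_sqrt h0]; ring
    have habs : |t * Real.log t| = t * (-Real.log t) := by
      rw [abs_of_nonpos (mul_nonpos_of_nonneg_of_nonpos h0 hlt)]; ring
    rw [habs, h2]
    have hsq : Real.sqrt t * Real.sqrt t = t := Real.mul_self_sqrt h0
    have hsq2 : Real.sqrt (Real.sqrt t) * Real.sqrt (Real.sqrt t) = Real.sqrt t :=
      Real.mul_self_sqrt hr0.le
    have key : t * (-(2 * Real.log (Real.sqrt t))) ≤ t * (2 * (2 / Real.sqrt (Real.sqrt t))) := by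
      apply mul_le_mul_of_nonneg_left _ h0
      linarith
    refine key.trans (le_of_eq ?_)
    have hne : Real.sqrt (Real.sqrt t) ≠ 0 := ne_of_gt hs0
    field_simp
    nlinarith [hsq, hsq2]

lemma aux_hasDerivAt_mul_log {m : ℝ → ℝ} {x₀ M : ℝ} (hM : 0 < M)
    (hb : ∀ᶠ x in nhds x₀, 0 ≤ m x ∧ m x ≤ M * (x - x₀)^2) :
    HasDerivAt (fun x => m x * Real.log (m x)) 0 x₀ := by
  have hm0 : m x₀ = 0 := by
    have := hb.self_of_nhds
    nlinarith [this.1, this.2]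
  rw [hasDerivAt_iff_isLittleO, Asymptotics.isLittleO_iff]
  intro c hc
  set A : ℝ := 4 * Real.sqrt M * Real.sqrt (Real.sqrt M) + 1 with hA
  have hA1 : 1 ≤ A := by
    have : 0 ≤ 4 * Real.sqrt M * Real.sqrt (Real.sqrt M) := by positivity
    linarith
  have hA0 : 0 < A := by linarith
  set δ : ℝ := min 1 (min (1/(M+1)) ((c/A)^2)) with hδ
  have hδ0 : 0 < δ := by
    apply lt_min one_pos
    apply lt_min (by positivity) (by positivity)
  filter_upwards [hb, Metric.closedBall_mem_nhds x₀ hδ0] with x hx1 hx2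
  simp only [hm0, smul_zero, sub_zero, Real.log_zero, mul_zero]
  rw [Real.norm_eq_abs, Real.norm_eq_abs]
  set s : ℝ := |x - x₀| with hs
  have hs0 : 0 ≤ s := abs_nonneg _
  have hsδ : s ≤ δ := by
    rw [Metric.mem_closedBall, Real.dist_eq] at hx2
    exact hx2
  have hs1 : s ≤ 1 := hsδ.trans (min_le_left _ _)
  have hsM : s ≤ 1/(M+1) := hsδ.trans ((min_le_right _ _).trans (min_le_left _ _))
  have hsc : s ≤ (c/A)^2 := hsδ.trans ((min_le_right _ _).trans (min_le_right _ _))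
  obtain ⟨ht0, htM⟩ := hx1
  have hsqeq : (x - x₀)^2 = s^2 := (sq_abs _).symm
  rw [hsqeq] at htM
  have ht1 : m x ≤ 1 := by
    have hkey : M * (1/(M+1)) < 1 := by
      rw [mul_one_div, div_lt_one (by linarith)]; linarith
    nlinarith [hkey, htM, mul_nonneg hM.le (mul_nonneg hs0 (sub_nonneg.2 hs1)),
      mul_nonneg hM.le (sub_nonneg.2 hsM)]
  have hbound := aux_mul_log_bound ht0 ht1
  have h1 : Real.sqrt (m x) ≤ Real.sqrt M * s := by
    have := Real.sqrt_le_sqrt htM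
    rwa [Real.sqrt_mul hM.le, Real.sqrt_sq hs0] at this
  have h2 : Real.sqrt (Real.sqrt (m x)) ≤ Real.sqrt (Real.sqrt M) * Real.sqrt s := by
    have := Real.sqrt_le_sqrt h1
    rwa [Real.sqrt_mul (Real.sqrt_nonneg M)] at this
  have h3 : Real.sqrt s ≤ c / A := by
    have := Real.sqrt_le_sqrt hsc
    rwa [Real.sqrt_sq (by positivity)] at this
  have h4 : |m x * Real.log (m x)| ≤ 4 * (Real.sqrt M * s) * (Real.sqrt (Real.sqrt M) * Real.sqrt s) := by
    refine hbound.trans ?_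
    have hn1 : 0 ≤ Real.sqrt (m x) := Real.sqrt_nonneg _
    have hn2 : 0 ≤ Real.sqrt (Real.sqrt (m x)) := Real.sqrt_nonneg _
    have hn3 : 0 ≤ Real.sqrt M * s := by positivity
    nlinarith
  refine h4.trans ?_
  have h5 : 4 * (Real.sqrt M * s) * (Real.sqrt (Real.sqrt M) * Real.sqrt s)
      = (4 * Real.sqrt M * Real.sqrt (Real.sqrt M) * Real.sqrt s) * s := by ring
  rw [h5]
  apply mul_le_mul_of_nonneg_right _ hs0
  have h6 : 4 * Real.sqrt M * Real.sqrt (Real.sqrt M) * Real.sqrt s ≤ (A - 1) * (c/A) := by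
    have h7 : 0 ≤ 4 * Real.sqrt M * Real.sqrt (Real.sqrt M) := by positivity
    have h8 : 0 ≤ c / A := by positivity
    calc 4 * Real.sqrt M * Real.sqrt (Real.sqrt M) * Real.sqrt s
        ≤ 4 * Real.sqrt M * Real.sqrt (Real.sqrt M) * (c/A) := by
          apply mul_le_mul_of_nonneg_left h3 h7
      _ = (A - 1) * (c/A) := by rw [hA]; ring
  refine h6.trans ?_
  rw [div_eq_mul_inv]
  have : (A - 1) * (c * A⁻¹) = c * ((A-1) * A⁻¹) := by ring
  rw [this]
  have h9 : (A - 1) * A⁻¹ ≤ 1 := by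
    rw [← div_eq_mul_inv, div_le_one hA0]
    linarith
  nlinarith

set_option maxHeartbeats 2000000 in
/-- Classification of nontrivial `H¹` solutions of the stationary logarithmic Schrödinger
equation on the half-line `(0,∞)`: they are Gaussians `e^{iθ} e^{(ω+1)/2} e^{-(x+c)²/2}`. -/
theorem halfline_solutions_are_gaussians (ω : ℝ) (u u' u'' : ℝ → ℂ)
    (hd1 : ∀ x ∈ Set.Ioi (0 : ℝ), HasDerivAt u (u' x) x)
    (hd2 : ∀ x ∈ Set.Ioi (0 : ℝ), HasDerivAt u' (u'' x) x)
    (hc2 : ContinuousOn u'' (Set.Ioi 0))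
    (hode : ∀ x ∈ Set.Ioi (0 : ℝ),
      -u'' x + (ω : ℂ) * u x - u x * (Real.log (‖u x‖ ^ 2) : ℂ) = 0)
    (hnt : ∃ x ∈ Set.Ioi (0 : ℝ), u x ≠ 0)
    (hu2 : MeasureTheory.IntegrableOn (fun x => ‖u x‖ ^ 2) (Set.Ioi 0))
    (hu'2 : MeasureTheory.IntegrableOn (fun x => ‖u' x‖ ^ 2) (Set.Ioi 0)) :
    ∃ θ c : ℝ, ∀ x ∈ Set.Ioi (0 : ℝ),
      u x = Complex.exp (θ * Complex.I) *
        ((Real.exp ((ω + 1) / 2) * Real.exp (-(x + c) ^ 2 / 2) : ℝ) : ℂ) := by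
  have hmre : ∀ z : ℂ, ((starRingEnd ℂ) z * z).re = ‖z‖^2 := by
    intro z
    rw [mul_comm, Complex.mul_conj, Complex.ofReal_re]
    simp [Complex.normSq_eq_norm_sq]
  have hreswap : ∀ z w : ℂ, ((starRingEnd ℂ) z * w).re = ((starRingEnd ℂ) w * z).re := by
    intro z w
    rw [show (starRingEnd ℂ) w * z = (starRingEnd ℂ) ((starRingEnd ℂ) z * w) by
      rw [map_mul]; simp [mul_comm], Complex.conj_re]
  -- derivative of x ↦ ‖f x‖² for complex f
  have hnormsq : ∀ (f f' : ℝ → ℂ) (x : ℝ), HasDerivAt f (f' x) x →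
      HasDerivAt (fun y => ‖f y‖^2) (2 * ((starRingEnd ℂ) (f x) * f' x).re) x := by
    intro f f' x h
    have h1 : HasDerivAt (fun y => (starRingEnd ℂ) (f y)) ((starRingEnd ℂ) (f' x)) x := h.star
    have h2 := h1.mul h
    have h3 := Complex.reCLM.hasFDerivAt.comp_hasDerivAt x h2
    have h4 : (fun y => Complex.reCLM ((starRingEnd ℂ) (f y) * f y)) = fun y => ‖f y‖^2 := by
      funext y; simp only [Complex.reCLM_apply]; exact hmre (f y)
    simp only [Function.comp_def, Pi.mul_apply] at h3
    rw [h4] at h3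
    refine h3.congr_deriv ?_
    simp only [Complex.reCLM_apply, Complex.add_re]
    rw [hreswap (f' x) (f x)]; ring
  -- ODE rearranged
  have hODE : ∀ x ∈ Set.Ioi (0:ℝ), u'' x = (ω : ℂ) * u x - u x * (Real.log (‖u x‖^2) : ℂ) := by
    intro x hx
    have := hode x hx
    linear_combination -this
  -- conj u * u''  is real
  have hconjuu'' : ∀ x ∈ Set.Ioi (0:ℝ), (starRingEnd ℂ) (u x) * u'' x
      = (((ω - Real.log (‖u x‖^2)) * ‖u x‖^2 : ℝ) : ℂ) := by
    intro x hx
    rw [hODE x hx]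
    have hcu : (starRingEnd ℂ) (u x) * u x = ((‖u x‖^2 : ℝ) : ℂ) := by
      rw [mul_comm, Complex.mul_conj]
      norm_cast
      simp [Complex.normSq_eq_norm_sq]
    rw [show (starRingEnd ℂ) (u x) * ((ω:ℂ) * u x - u x * ((Real.log (‖u x‖^2) : ℝ) : ℂ))
        = ((ω:ℂ) - ((Real.log (‖u x‖^2) : ℝ) : ℂ)) * ((starRingEnd ℂ) (u x) * u x) by ring, hcu]
    push_cast
    ring
  have hSIcc : ∀ x ∈ Set.Ioi (0:ℝ), ∀ y ∈ Set.Ioi (0:ℝ), Set.uIcc x y ⊆ Set.Ioi 0 := by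
    intro x hx y hy z hz
    rw [Set.mem_uIcc] at hz
    rcases hz with ⟨h1, _⟩ | ⟨h1, _⟩
    · exact lt_of_lt_of_le hx h1
    · exact lt_of_lt_of_le hy h1
  -- The Wronskian-type quantity W
  have hW : ∀ x ∈ Set.Ioi (0:ℝ),
      HasDerivAt (fun y => ((starRingEnd ℂ) (u y) * u' y).im) 0 x := by
    intro x hx
    have h1 : HasDerivAt (fun y => (starRingEnd ℂ) (u y)) ((starRingEnd ℂ) (u' x)) x :=
      (hd1 x hx).star
    have h2 := h1.mul (hd2 x hx)
    have h3 := Complex.imCLM.hasFDerivAt.comp_hasDerivAt x h2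
    simp only [Function.comp_def, Complex.imCLM_apply] at h3
    refine h3.congr_deriv ?_
    rw [Complex.add_im]
    have e1 : ((starRingEnd ℂ) (u' x) * u' x).im = 0 := by
      rw [mul_comm, Complex.mul_conj]; simp
    have e2 : ((starRingEnd ℂ) (u x) * u'' x).im = 0 := by
      rw [hconjuu'' x hx, Complex.ofReal_im]
    rw [e1, e2]; ring
  have hfint : MeasureTheory.IntegrableOn (fun x => ‖u x‖^2 + ‖u' x‖^2) (Set.Ioi 0) :=
    hu2.add hu'2
  have hW0 : ∀ x ∈ Set.Ioi (0:ℝ), ((starRingEnd ℂ) (u x) * u' x).im = 0 := by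
    intro x hx
    have key : ∀ ε > (0:ℝ), |((starRingEnd ℂ) (u x) * u' x).im| < ε := by
      intro ε hε
      obtain ⟨y, hy, hfy⟩ := aux_exists_small_value hfint hε
      have hconst : ((starRingEnd ℂ) (u x) * u' x).im = ((starRingEnd ℂ) (u y) * u' y).im :=
        aux_const_uIcc (fun z hz => hW z (hSIcc x hx y hy hz))
      rw [hconst]
      have hb1 : |((starRingEnd ℂ) (u y) * u' y).im| ≤ ‖(starRingEnd ℂ) (u y) * u' y‖ :=
        Complex.abs_im_le_norm _
      have hb2 : ‖(starRingEnd ℂ) (u y) * u' y‖ = ‖u y‖ * ‖u' y‖ := by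
        rw [norm_mul, RCLike.norm_conj]
      have hb3 : ‖u y‖ * ‖u' y‖ ≤ (‖u y‖^2 + ‖u' y‖^2) / 2 := by
        nlinarith [sq_nonneg (‖u y‖ - ‖u' y‖)]
      calc |((starRingEnd ℂ) (u y) * u' y).im| ≤ (‖u y‖^2 + ‖u' y‖^2)/2 := by
            rw [← hb2] at hb3; exact hb1.trans hb3
        _ < ε := by nlinarith [norm_nonneg (u y), norm_nonneg (u' y), sq_nonneg (‖u y‖)]
    by_contra h
    exact absurd (key _ (abs_pos.2 h)) (lt_irrefl _)
  have hcu : ContinuousOn u (Set.Ioi 0) := fun y hy =>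
    (hd1 y hy).continuousAt.continuousWithinAt
  have hcu' : ContinuousOn u' (Set.Ioi 0) := fun y hy =>
    (hd2 y hy).continuousAt.continuousWithinAt
  -- derivative of x ↦ Re(conj u * u')
  have hNum : ∀ x ∈ Set.Ioi (0:ℝ), HasDerivAt (fun y => ((starRingEnd ℂ) (u y) * u' y).re)
      (((starRingEnd ℂ) (u' x) * u' x + (starRingEnd ℂ) (u x) * u'' x).re) x := by
    intro x hx
    have h2 := ((hd1 x hx).star.mul (hd2 x hx))
    have h3 := Complex.reCLM.hasFDerivAt.comp_hasDerivAt x h2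
    simpa [Function.comp_def] using h3
  -- energy E has zero derivative
  have hE : ∀ x ∈ Set.Ioi (0:ℝ), HasDerivAt
      (fun y => ‖u' y‖^2 - ω * ‖u y‖^2 + ‖u y‖^2 * Real.log (‖u y‖^2) - ‖u y‖^2) 0 x := by
    intro x hx
    have hd_m := hnormsq u u' x (hd1 x hx)
    have hd_A := hnormsq u' u'' x (hd2 x hx)
    by_cases hz : u x = 0
    · have hu''0 : u'' x = 0 := by rw [hODE x hx, hz]; simp
      have hm'0 : (2 : ℝ) * ((starRingEnd ℂ) (u x) * u' x).re = 0 := by rw [hz]; simp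
      have hA'0 : (2 : ℝ) * ((starRingEnd ℂ) (u' x) * u'' x).re = 0 := by rw [hu''0]; simp
      rw [hm'0] at hd_m
      rw [hA'0] at hd_A
      have hx' : (0:ℝ) < x := hx
      have hδ0 : (0:ℝ) < x/2 := half_pos hx'
      have hJ : Set.Icc (x - x/2) (x + x/2) ⊆ Set.Ioi 0 := by
        intro z hz'
        have := hz'.1
        simp only [Set.mem_Ioi]
        linarith
      have hxJ : x ∈ Set.Icc (x - x/2) (x + x/2) := by
        constructor <;> linarith
      have hgcont : ContinuousOn
          (fun y => 2 * ((starRingEnd ℂ) (u' y) * u' y + (starRingEnd ℂ) (u y) * u'' y).re)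
          (Set.Icc (x - x/2) (x + x/2)) := by
        apply ContinuousOn.mul continuousOn_const
        apply Complex.continuous_re.comp_continuousOn
        exact ((hcu'.mono hJ).star.mul (hcu'.mono hJ)).add
          ((hcu.mono hJ).star.mul (hc2.mono hJ))
      obtain ⟨M₀, hM₀⟩ := (isCompact_Icc).exists_bound_of_continuousOn hgcont
      have hM₀0 : 0 ≤ M₀ := le_trans (norm_nonneg _) (hM₀ x hxJ)
      have hm'der : ∀ y ∈ Set.Icc (x - x/2) (x + x/2),
          HasDerivWithinAt (fun z => 2 * ((starRingEnd ℂ) (u z) * u' z).re)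
            (2 * ((starRingEnd ℂ) (u' y) * u' y + (starRingEnd ℂ) (u y) * u'' y).re)
            (Set.Icc (x - x/2) (x + x/2)) y := fun y hy =>
        ((hNum y (hJ hy)).const_mul 2).hasDerivWithinAt
      have hm'bound : ∀ y ∈ Set.Icc (x - x/2) (x + x/2),
          |2 * ((starRingEnd ℂ) (u y) * u' y).re| ≤ M₀ * |y - x| := by
        intro y hy
        have hest := (convex_Icc _ _).norm_image_sub_le_of_norm_hasDerivWithin_le
          hm'der (fun z hz' => hM₀ z hz') hxJ hy
        rw [Real.norm_eq_abs, Real.norm_eq_abs] at hest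
        rw [hm'0, sub_zero] at hest
        exact hest
      have hmbound : ∀ y ∈ Set.Icc (x - x/2) (x + x/2), ‖u y‖^2 ≤ (M₀ + 1) * (y - x)^2 := by
        intro y hy
        have hsub : Set.uIcc x y ⊆ Set.Icc (x - x/2) (x + x/2) :=
          (Set.ordConnected_Icc).uIcc_subset hxJ hy
        have habs : ∀ z ∈ Set.uIcc x y, |z - x| ≤ |y - x| := by
          intro z hz'
          rw [Set.mem_uIcc] at hz'
          have h3 := le_abs_self (y - x)
          have h4 := neg_abs_le (y - x)
          rcases hz' with ⟨ha, hb⟩ | ⟨ha, hb⟩ <;> rw [abs_le] <;> constructor <;> linarith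
        have hder2 : ∀ z ∈ Set.uIcc x y, HasDerivWithinAt (fun w => ‖u w‖^2)
            (2 * ((starRingEnd ℂ) (u z) * u' z).re) (Set.uIcc x y) z := fun z hz' =>
          (hnormsq u u' z (hd1 z (hJ (hsub hz')))).hasDerivWithinAt
        have hbnd2 : ∀ z ∈ Set.uIcc x y,
            ‖2 * ((starRingEnd ℂ) (u z) * u' z).re‖ ≤ M₀ * |y - x| := by
          intro z hz'
          rw [Real.norm_eq_abs]
          refine (hm'bound z (hsub hz')).trans ?_
          exact mul_le_mul_of_nonneg_left (habs z hz') hM₀0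
        have hest := (convex_uIcc x y).norm_image_sub_le_of_norm_hasDerivWithin_le
          hder2 hbnd2 Set.left_mem_uIcc Set.right_mem_uIcc
        rw [Real.norm_eq_abs, Real.norm_eq_abs] at hest
        have hmx0 : ‖u x‖^2 = 0 := by rw [hz]; simp
        rw [hmx0, sub_zero] at hest
        have h5 : |‖u y‖^2| = ‖u y‖^2 := abs_of_nonneg (by positivity)
        rw [h5] at hest
        calc ‖u y‖^2 ≤ M₀ * |y - x| * |y - x| := hest
          _ = M₀ * (y - x)^2 := by rw [mul_assoc, ← abs_mul, ← sq, abs_of_nonneg (sq_nonneg _)]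
          _ ≤ (M₀ + 1) * (y - x)^2 := by nlinarith [sq_nonneg (y - x)]
      have hd_N : HasDerivAt (fun y => ‖u y‖^2 * Real.log (‖u y‖^2)) 0 x := by
        apply aux_hasDerivAt_mul_log (M := M₀ + 1) (by linarith)
        filter_upwards [Icc_mem_nhds (by linarith : x - x/2 < x) (by linarith : x < x + x/2)]
          with y hy
        exact ⟨by positivity, hmbound y hy⟩
      have hcomb := ((hd_A.sub (hd_m.const_mul ω)).add hd_N).sub hd_m
      exact hcomb.congr_deriv (by norm_num)
    · -- u x ≠ 0
      have hm0 : 0 < ‖u x‖^2 := by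
        have := norm_pos_iff.2 hz
        positivity
      have hlog : HasDerivAt Real.log (‖u x‖^2)⁻¹ (‖u x‖^2) := Real.hasDerivAt_log (ne_of_gt hm0)
      have htlog : HasDerivAt (fun t => t * Real.log t) (Real.log (‖u x‖^2) + 1) (‖u x‖^2) := by
        have h := (hasDerivAt_id (‖u x‖^2)).mul hlog
        refine h.congr_deriv ?_
        rw [id_eq, one_mul, mul_inv_cancel₀ (ne_of_gt hm0)]
      have hd_N := htlog.comp x hd_m
      have hcomb := ((hd_A.sub (hd_m.const_mul ω)).add hd_N).sub hd_m
      refine hcomb.congr_deriv ?_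
      have he : ((starRingEnd ℂ) (u' x) * u'' x).re
          = (ω - Real.log (‖u x‖^2)) * ((starRingEnd ℂ) (u x) * u' x).re := by
        rw [hODE x hx]
        rw [show (starRingEnd ℂ) (u' x) * ((ω:ℂ) * u x - u x * ((Real.log (‖u x‖^2) : ℝ) : ℂ))
            = (((ω - Real.log (‖u x‖^2) : ℝ)) : ℂ) * ((starRingEnd ℂ) (u' x) * u x) by
          push_cast; ring]
        rw [Complex.re_ofReal_mul, hreswap (u' x) (u x)]
      rw [he]
      ring
  have hE0 : ∀ x ∈ Set.Ioi (0:ℝ),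
      ‖u' x‖^2 - ω * ‖u x‖^2 + ‖u x‖^2 * Real.log (‖u x‖^2) - ‖u x‖^2 = 0 := by
    intro x hx
    have key : ∀ δ > (0:ℝ),
        |‖u' x‖^2 - ω * ‖u x‖^2 + ‖u x‖^2 * Real.log (‖u x‖^2) - ‖u x‖^2| < δ := by
      intro δ hδ
      have hB : (0:ℝ) < 2 + |ω| := by positivity
      have hε0 : (0:ℝ) < min 1 (min (δ/(2*(2+|ω|))) ((δ/9)^2)) := by
        apply lt_min one_pos (lt_min (by positivity) (by positivity))
      obtain ⟨y, hy, hfy⟩ := aux_exists_small_value hfint hε0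
      have hconst : ‖u' x‖^2 - ω * ‖u x‖^2 + ‖u x‖^2 * Real.log (‖u x‖^2) - ‖u x‖^2
          = ‖u' y‖^2 - ω * ‖u y‖^2 + ‖u y‖^2 * Real.log (‖u y‖^2) - ‖u y‖^2 :=
        aux_const_uIcc (fun z hz => hE z (hSIcc x hx y hy hz))
      rw [hconst]
      set ε : ℝ := min 1 (min (δ/(2*(2+|ω|))) ((δ/9)^2)) with hεdef
      have hε1 : ε ≤ 1 := min_le_left _ _
      have hεB : ε ≤ δ/(2*(2+|ω|)) := (min_le_right _ _).trans (min_le_left _ _)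
      have hεc : ε ≤ (δ/9)^2 := (min_le_right _ _).trans (min_le_right _ _)
      have hmnn : (0:ℝ) ≤ ‖u y‖^2 := by positivity
      have hAnn : (0:ℝ) ≤ ‖u' y‖^2 := by positivity
      have hm' : ‖u y‖^2 < ε := by linarith
      have hA' : ‖u' y‖^2 < ε := by linarith
      have hm1 : ‖u y‖^2 ≤ 1 := hm'.le.trans hε1
      have hmL : |‖u y‖^2 * Real.log (‖u y‖^2)| ≤ 4 * (δ/9) := by
        refine (aux_mul_log_bound hmnn hm1).trans ?_
        have h1 : Real.sqrt (Real.sqrt (‖u y‖^2)) ≤ 1 := by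
          exact Real.sqrt_le_one.2 (Real.sqrt_le_one.2 hm1)
        have h2 : Real.sqrt (‖u y‖^2) ≤ δ/9 := by
          refine (Real.sqrt_le_sqrt (hm'.le.trans hεc)).trans ?_
          rw [Real.sqrt_sq (by positivity)]
        have h3 : (0:ℝ) ≤ Real.sqrt (‖u y‖^2) := Real.sqrt_nonneg _
        have h4 : (0:ℝ) ≤ Real.sqrt (Real.sqrt (‖u y‖^2)) := Real.sqrt_nonneg _
        nlinarith
      have hωm : |ω * ‖u y‖^2| ≤ |ω| * ε := by
        rw [abs_mul, abs_of_nonneg hmnn]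
        exact mul_le_mul_of_nonneg_left hm'.le (abs_nonneg ω)
      have hBε : (2 + |ω|) * ε ≤ δ/2 := by
        have h5 := mul_le_mul_of_nonneg_left hεB hB.le
        calc (2 + |ω|) * ε ≤ (2 + |ω|) * (δ/(2*(2+|ω|))) := h5
          _ = δ/2 := by field_simp
      have hω1 := (abs_le.1 hωm).1
      have hω2 := (abs_le.1 hωm).2
      have hL1 := (abs_le.1 hmL).1
      have hL2 := (abs_le.1 hmL).2
      rw [abs_lt]
      constructor <;> linarith
    by_contra h
    exact absurd (key _ (abs_pos.2 h)) (lt_irrefl _)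
  -- conj z * z as a real cast
  have hconj_self : ∀ z : ℂ, (starRingEnd ℂ) z * z = ((‖z‖^2 : ℝ) : ℂ) := by
    intro z
    rw [mul_comm, Complex.mul_conj]
    norm_cast
    simp [Complex.normSq_eq_norm_sq]
  -- u' is a real multiple of u where u ≠ 0
  have hpar : ∀ x ∈ Set.Ioi (0:ℝ), u x ≠ 0 →
      u' x = ((((starRingEnd ℂ) (u x) * u' x).re / ‖u x‖^2 : ℝ) : ℂ) * u x := by
    intro x hx hz
    have hm0 : (0:ℝ) < ‖u x‖^2 := by
      have := norm_pos_iff.2 hz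
      positivity
    have hcu_ne : (starRingEnd ℂ) (u x) ≠ 0 := by simpa using hz
    apply mul_left_cancel₀ hcu_ne
    have hr : (starRingEnd ℂ) (u x) * u' x
        = ((((starRingEnd ℂ) (u x) * u' x).re : ℝ) : ℂ) := by
      apply Complex.ext
      · simp
      · simp [hW0 x hx]
    rw [show (starRingEnd ℂ) (u x) * (((((starRingEnd ℂ) (u x) * u' x).re / ‖u x‖^2 : ℝ) : ℂ) * u x)
        = ((((starRingEnd ℂ) (u x) * u' x).re / ‖u x‖^2 : ℝ) : ℂ) * ((starRingEnd ℂ) (u x) * u x)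
        by ring]
    rw [hconj_self (u x), ← Complex.ofReal_mul, div_mul_cancel₀ _ (ne_of_gt hm0)]
    exact hr
  -- |u'|² = l² m where u ≠ 0
  have hu'sq : ∀ x ∈ Set.Ioi (0:ℝ), u x ≠ 0 →
      ‖u' x‖^2 = (((starRingEnd ℂ) (u x) * u' x).re / ‖u x‖^2)^2 * ‖u x‖^2 := by
    intro x hx hz
    conv_lhs => rw [hpar x hx hz]
    rw [norm_mul, Complex.norm_real, Real.norm_eq_abs, mul_pow, sq_abs]
  -- l² = ω + 1 - log m
  have hlsq : ∀ x ∈ Set.Ioi (0:ℝ), u x ≠ 0 →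
      (((starRingEnd ℂ) (u x) * u' x).re / ‖u x‖^2)^2 = ω + 1 - Real.log (‖u x‖^2) := by
    intro x hx hz
    have hm0 : (0:ℝ) < ‖u x‖^2 := by
      have := norm_pos_iff.2 hz
      positivity
    have hEx := hE0 x hx
    rw [hu'sq x hx hz] at hEx
    apply mul_right_cancel₀ (ne_of_gt hm0)
    ring_nf
    ring_nf at hEx
    linarith
  -- the logarithmic derivative l has derivative -1 where u ≠ 0
  have hl : ∀ x ∈ Set.Ioi (0:ℝ), u x ≠ 0 →
      HasDerivAt (fun y => ((starRingEnd ℂ) (u y) * u' y).re / ‖u y‖^2) (-1) x := by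
    intro x hx hz
    have hm0 : (0:ℝ) < ‖u x‖^2 := by
      have := norm_pos_iff.2 hz
      positivity
    have hdiv := (hNum x hx).div (hnormsq u u' x (hd1 x hx)) (ne_of_gt hm0)
    refine hdiv.congr_deriv (Eq.symm ?_)
    rw [Complex.add_re, hmre (u' x), hconjuu'' x hx, Complex.ofReal_re]
    have h1 := hu'sq x hx hz
    have h2 := hlsq x hx hz
    rw [div_pow, div_eq_iff (ne_of_gt (pow_pos hm0 2))] at h2
    have h4 : ‖u' x‖^2 * ‖u x‖^2 = (((starRingEnd ℂ) (u x) * u' x).re)^2 := by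
      rw [h1, div_pow, div_mul_eq_mul_div, div_mul_eq_mul_div,
        div_eq_iff (ne_of_gt (pow_pos hm0 2))]
      ring
    rw [eq_div_iff (ne_of_gt (pow_pos hm0 2))]
    linear_combination (-1 : ℝ) * h4 + h2
  -- l + x is constant on intervals avoiding zeros of u
  have haffine : ∀ x₁ ∈ Set.Ioi (0:ℝ), ∀ x₂ ∈ Set.Ioi (0:ℝ), (∀ z ∈ Set.uIcc x₁ x₂, u z ≠ 0) →
      ((starRingEnd ℂ) (u x₁) * u' x₁).re / ‖u x₁‖^2 + x₁
        = ((starRingEnd ℂ) (u x₂) * u' x₂).re / ‖u x₂‖^2 + x₂ := by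
    intro x₁ h₁ x₂ h₂ hne
    apply aux_const_uIcc (f := fun y => ((starRingEnd ℂ) (u y) * u' y).re / ‖u y‖^2 + y)
    intro z hz
    have hzS : z ∈ Set.Ioi (0:ℝ) := hSIcc x₁ h₁ x₂ h₂ hz
    have hcomb := (hl z hzS (hne z hz)).add (hasDerivAt_id z)
    exact hcomb.congr_deriv (by norm_num)
  -- u has no zeros on (0,∞)
  have hnz : ∀ x ∈ Set.Ioi (0:ℝ), u x ≠ 0 := by
    by_contra hcon
    push_neg at hcon
    obtain ⟨x₀, hx₀S, hx₀⟩ := hcon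
    obtain ⟨x₁, hx₁S, hx₁⟩ := hnt
    have hx₀S' : (0:ℝ) < x₀ := hx₀S
    have hx₁S' : (0:ℝ) < x₁ := hx₁S
    rcases lt_trichotomy x₀ x₁ with hlt | heq | hgt
    · -- zero to the left of x₁
      set Z : Set ℝ := Set.Icc x₀ x₁ ∩ u ⁻¹' {0} with hZdef
      have hZc : IsClosed Z := by
        apply (hcu.mono (fun z hz => lt_of_lt_of_le hx₀S' hz.1)).preimage_isClosed_of_isClosed
          isClosed_Icc isClosed_singleton
      have hZne : Z.Nonempty := ⟨x₀, ⟨le_refl x₀, hlt.le⟩, hx₀⟩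
      have hZbdd : BddAbove Z := ⟨x₁, fun z hz => hz.1.2⟩
      have haZ : sSup Z ∈ Z := hZc.csSup_mem hZne hZbdd
      set a := sSup Z with hadef
      have hua : u a = 0 := haZ.2
      have haI : a ∈ Set.Icc x₀ x₁ := haZ.1
      have haS : (0:ℝ) < a := lt_of_lt_of_le hx₀S' haI.1
      have halt : a < x₁ := lt_of_le_of_ne haI.2 (fun h => hx₁ (h ▸ hua))
      have hne : ∀ z ∈ Set.Ioc a x₁, u z ≠ 0 := by
        intro z hz hzz
        have hzZ : z ∈ Z := ⟨⟨le_trans haI.1 hz.1.le, hz.2⟩, hzz⟩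
        exact absurd (le_csSup hZbdd hzZ) (not_le.2 hz.1)
      set B : ℝ := |((starRingEnd ℂ) (u x₁) * u' x₁).re / ‖u x₁‖^2| + (x₁ - a) with hBdef
      have hmlb : ∀ x ∈ Set.Ioc a x₁, Real.exp (ω + 1 - B^2) ≤ ‖u x‖^2 := by
        intro x hx'
        have hxS : x ∈ Set.Ioi (0:ℝ) := lt_trans haS hx'.1
        have hsub : Set.uIcc x x₁ ⊆ Set.Ioc a x₁ := by
          intro z hz
          rw [Set.mem_uIcc] at hz
          rcases hz with ⟨h1, h2⟩ | ⟨h1, h2⟩ <;> constructor <;>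
            first | linarith [hx'.1, hx'.2] | linarith [hx'.1, hx'.2]
        have haf := haffine x hxS x₁ hx₁S (fun z hz => hne z (hsub hz))
        have hblx : |((starRingEnd ℂ) (u x) * u' x).re / ‖u x‖^2| ≤ B := by
          have h5 := le_abs_self (((starRingEnd ℂ) (u x₁) * u' x₁).re / ‖u x₁‖^2)
          have h6 := neg_abs_le (((starRingEnd ℂ) (u x₁) * u' x₁).re / ‖u x₁‖^2)
          rw [abs_le]
          constructor <;> [skip; skip] <;> rw [hBdef] <;> nlinarith [hx'.1, hx'.2, haf]
        have h2 := hlsq x hxS (hne x hx')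
        have hm0 : (0:ℝ) < ‖u x‖^2 := by
          have := norm_pos_iff.2 (hne x hx')
          positivity
        have h4 : (((starRingEnd ℂ) (u x) * u' x).re / ‖u x‖^2)^2 ≤ B^2 := by
          nlinarith [sq_abs (((starRingEnd ℂ) (u x) * u' x).re / ‖u x‖^2),
            abs_nonneg (((starRingEnd ℂ) (u x) * u' x).re / ‖u x‖^2)]
        have h5 : ω + 1 - B^2 ≤ Real.log (‖u x‖^2) := by
          calc ω + 1 - B^2
              ≤ ω + 1 - (((starRingEnd ℂ) (u x) * u' x).re / ‖u x‖^2)^2 := by linarith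
            _ = Real.log (‖u x‖^2) := by linarith
        calc Real.exp (ω + 1 - B^2) ≤ Real.exp (Real.log (‖u x‖^2)) := Real.exp_le_exp.2 h5
          _ = ‖u x‖^2 := Real.exp_log hm0
      have hconta : ContinuousAt (fun y => ‖u y‖^2) a := ((hd1 a haS).continuousAt.norm.pow 2)
      have hlim : ∀ᶠ y in nhds a, ‖u y‖^2 < Real.exp (ω + 1 - B^2) := by
        apply hconta.tendsto.eventually_lt_const
        rw [hua]
        simpa using Real.exp_pos (ω + 1 - B^2)
      obtain ⟨δ', hδ'0, hδ'⟩ := Metric.eventually_nhds_iff.1 hlim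
      set x := min (a + δ'/2) ((a + x₁)/2) with hxdef
      have hx_mem : x ∈ Set.Ioc a x₁ := by
        constructor
        · apply lt_min <;> linarith
        · exact (min_le_right _ _).trans (by linarith)
      have hdist : dist x a < δ' := by
        rw [Real.dist_eq, abs_of_pos (sub_pos.2 hx_mem.1)]
        have := min_le_left (a + δ'/2) ((a + x₁)/2)
        linarith
      exact absurd (hmlb x hx_mem) (not_le.2 (hδ' hdist))
    · exact hx₁ (heq ▸ hx₀)
    · -- zero to the right of x₁
      set Z : Set ℝ := Set.Icc x₁ x₀ ∩ u ⁻¹' {0} with hZdef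
      have hZc : IsClosed Z := by
        apply (hcu.mono (fun z hz => lt_of_lt_of_le hx₁S' hz.1)).preimage_isClosed_of_isClosed
          isClosed_Icc isClosed_singleton
      have hZne : Z.Nonempty := ⟨x₀, ⟨hgt.le, le_refl x₀⟩, hx₀⟩
      have hZbdd : BddBelow Z := ⟨x₁, fun z hz => hz.1.1⟩
      have haZ : sInf Z ∈ Z := hZc.csInf_mem hZne hZbdd
      set a := sInf Z with hadef
      have hua : u a = 0 := haZ.2
      have haI : a ∈ Set.Icc x₁ x₀ := haZ.1
      have haS : (0:ℝ) < a := lt_of_lt_of_le hx₁S' haI.1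
      have halt : x₁ < a := lt_of_le_of_ne haI.1 (fun h => hx₁ (h.symm ▸ hua))
      have hne : ∀ z ∈ Set.Ico x₁ a, u z ≠ 0 := by
        intro z hz hzz
        have hzZ : z ∈ Z := ⟨⟨hz.1, le_trans hz.2.le haI.2⟩, hzz⟩
        exact absurd (csInf_le hZbdd hzZ) (not_le.2 hz.2)
      set B : ℝ := |((starRingEnd ℂ) (u x₁) * u' x₁).re / ‖u x₁‖^2| + (a - x₁) with hBdef
      have hmlb : ∀ x ∈ Set.Ico x₁ a, Real.exp (ω + 1 - B^2) ≤ ‖u x‖^2 := by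
        intro x hx'
        have hxS : x ∈ Set.Ioi (0:ℝ) := lt_of_lt_of_le hx₁S' hx'.1
        have hsub : Set.uIcc x x₁ ⊆ Set.Ico x₁ a := by
          intro z hz
          rw [Set.mem_uIcc] at hz
          rcases hz with ⟨h1, h2⟩ | ⟨h1, h2⟩ <;> constructor <;>
            first | linarith [hx'.1, hx'.2] | linarith [hx'.1, hx'.2]
        have haf := haffine x hxS x₁ hx₁S (fun z hz => hne z (hsub hz))
        have hblx : |((starRingEnd ℂ) (u x) * u' x).re / ‖u x‖^2| ≤ B := by
          have h5 := le_abs_self (((starRingEnd ℂ) (u x₁) * u' x₁).re / ‖u x₁‖^2)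
          have h6 := neg_abs_le (((starRingEnd ℂ) (u x₁) * u' x₁).re / ‖u x₁‖^2)
          rw [abs_le]
          constructor <;> [skip; skip] <;> rw [hBdef] <;> nlinarith [hx'.1, hx'.2, haf]
        have h2 := hlsq x hxS (hne x hx')
        have hm0 : (0:ℝ) < ‖u x‖^2 := by
          have := norm_pos_iff.2 (hne x hx')
          positivity
        have h4 : (((starRingEnd ℂ) (u x) * u' x).re / ‖u x‖^2)^2 ≤ B^2 := by
          nlinarith [sq_abs (((starRingEnd ℂ) (u x) * u' x).re / ‖u x‖^2),
            abs_nonneg (((starRingEnd ℂ) (u x) * u' x).re / ‖u x‖^2)]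
        have h5 : ω + 1 - B^2 ≤ Real.log (‖u x‖^2) := by
          calc ω + 1 - B^2
              ≤ ω + 1 - (((starRingEnd ℂ) (u x) * u' x).re / ‖u x‖^2)^2 := by linarith
            _ = Real.log (‖u x‖^2) := by linarith
        calc Real.exp (ω + 1 - B^2) ≤ Real.exp (Real.log (‖u x‖^2)) := Real.exp_le_exp.2 h5
          _ = ‖u x‖^2 := Real.exp_log hm0
      have hconta : ContinuousAt (fun y => ‖u y‖^2) a := ((hd1 a haS).continuousAt.norm.pow 2)
      have hlim : ∀ᶠ y in nhds a, ‖u y‖^2 < Real.exp (ω + 1 - B^2) := by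
        apply hconta.tendsto.eventually_lt_const
        rw [hua]
        simpa using Real.exp_pos (ω + 1 - B^2)
      obtain ⟨δ', hδ'0, hδ'⟩ := Metric.eventually_nhds_iff.1 hlim
      set x := max (a - δ'/2) ((x₁ + a)/2) with hxdef
      have hx_mem : x ∈ Set.Ico x₁ a := by
        constructor
        · exact le_trans (by linarith) (le_max_right _ _)
        · apply max_lt <;> linarith
      have hdist : dist x a < δ' := by
        rw [Real.dist_eq, abs_of_neg (sub_neg.2 hx_mem.2)]
        have := le_max_left (a - δ'/2) ((x₁ + a)/2)
        linarith
      exact absurd (hmlb x hx_mem) (not_le.2 (hδ' hdist))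
  have h1S : (1:ℝ) ∈ Set.Ioi (0:ℝ) := Set.mem_Ioi.2 one_pos
  -- global affine formula for l
  have haff : ∀ x ∈ Set.Ioi (0:ℝ),
      ((starRingEnd ℂ) (u x) * u' x).re / ‖u x‖^2 + x
        = ((starRingEnd ℂ) (u 1) * u' 1).re / ‖u 1‖^2 + 1 := by
    intro x hx
    exact haffine x hx 1 h1S (fun z hz => hnz z (hSIcc x hx 1 h1S hz))
  set c : ℝ := -(((starRingEnd ℂ) (u 1) * u' 1).re / ‖u 1‖^2 + 1) with hcdef
  have hlval : ∀ x ∈ Set.Ioi (0:ℝ),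
      ((starRingEnd ℂ) (u x) * u' x).re / ‖u x‖^2 = -(x + c) := by
    intro x hx
    have := haff x hx
    rw [hcdef]
    linarith
  -- the function g = u * exp((x+c)²/2) is constant
  have hg : ∀ x ∈ Set.Ioi (0:ℝ),
      HasDerivAt (fun y => u y * Complex.exp (((y + c : ℝ) : ℂ)^2 / 2)) 0 x := by
    intro x hx
    have hc1 : HasDerivAt (fun y : ℝ => ((y : ℂ) + (c : ℂ))) 1 x := by
      simpa using (Complex.ofRealCLM.hasDerivAt (x := x)).add_const (c:ℂ)
    have hc2' : HasDerivAt (fun y : ℝ => ((y : ℂ) + (c : ℂ))^2 / 2) ((x : ℂ) + (c : ℂ)) x := by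
      have h := (hc1.mul hc1).div_const 2
      have hfe : (fun y : ℝ => ((y:ℂ)+(c:ℂ))^2/2) = fun y : ℝ => (((y:ℂ)+(c:ℂ))*((y:ℂ)+(c:ℂ)))/2 := by
        funext y
        ring
      rw [hfe]
      refine h.congr_deriv ?_
      ring
    have hexp := hc2'.cexp
    have hmul := (hd1 x hx).mul hexp
    have hfeq : (fun y => u y * Complex.exp (((y + c : ℝ) : ℂ)^2 / 2))
        = fun y => u y * Complex.exp (((y : ℂ) + (c : ℂ))^2 / 2) := by
      funext y
      push_cast
      ring_nf
    rw [hfeq]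
    refine hmul.congr_deriv ?_
    rw [hpar x hx (hnz x hx), hlval x hx]
    push_cast
    ring
  have hgc : ∀ x ∈ Set.Ioi (0:ℝ),
      u x * Complex.exp (((x + c : ℝ) : ℂ)^2 / 2)
        = u 1 * Complex.exp (((1 + c : ℝ) : ℂ)^2 / 2) := by
    intro x hx
    exact aux_const_uIcc (fun z hz => hg z (hSIcc x hx 1 h1S hz))
  set K : ℂ := u 1 * Complex.exp (((1 + c : ℝ) : ℂ)^2 / 2) with hKdef
  have hK0 : K ≠ 0 := mul_ne_zero (hnz 1 h1S) (Complex.exp_ne_zero _)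
  have hux : ∀ x ∈ Set.Ioi (0:ℝ), u x = K * Complex.exp (((-(x + c)^2/2 : ℝ) : ℂ)) := by
    intro x hx
    have hKx := hgc x hx
    have hne := Complex.exp_ne_zero (((x + c : ℝ) : ℂ)^2 / 2)
    rw [show ((((-(x + c)^2/2 : ℝ)) : ℂ)) = -(((x + c : ℝ) : ℂ)^2 / 2) by push_cast; ring,
      Complex.exp_neg, ← div_eq_mul_inv, eq_div_iff hne]
    exact hKx
  have hnormexp : ∀ t : ℝ, ‖Complex.exp ((t : ℂ))‖ = Real.exp t := by
    intro t
    rw [Complex.norm_exp, Complex.ofReal_re]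
  have hnormux : ∀ x ∈ Set.Ioi (0:ℝ), ‖u x‖^2 = ‖K‖^2 * Real.exp (-(x + c)^2) := by
    intro x hx
    have h2t : (Real.exp (-(x+c)^2/2))^2 = Real.exp (-(x+c)^2) := by
      rw [pow_two, ← Real.exp_add]
      ring_nf
    rw [hux x hx, norm_mul, hnormexp, mul_pow, h2t]
  have hK2 : ‖K‖ = Real.exp ((ω + 1)/2) := by
    have hKpos : 0 < ‖K‖ := norm_pos_iff.2 hK0
    have hl1 := hlsq 1 h1S (hnz 1 h1S)
    rw [hlval 1 h1S] at hl1
    rw [hnormux 1 h1S] at hl1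
    rw [Real.log_mul (by positivity) (by positivity), Real.log_exp, Real.log_pow] at hl1
    have hlogK : Real.log ‖K‖ = (ω + 1)/2 := by
      push_cast at hl1
      nlinarith [hl1]
    rw [← hlogK, Real.exp_log hKpos]
  refine ⟨K.arg, c, ?_⟩
  intro x hx
  have hKpolar : ((‖K‖ : ℝ) : ℂ) * Complex.exp ((K.arg : ℂ) * Complex.I) = K :=
    Complex.norm_mul_exp_arg_mul_I K
  have habsK : (‖K‖ : ℝ) = ‖K‖ := rfl
  rw [hux x hx, ← Complex.ofReal_exp]
  conv_lhs => rw [← hKpolar]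
  rw [habsK, hK2, Complex.ofReal_mul]
  ring
end

section
/- Let γ > 0 and define, for t > 1/γ, σ(t) = t/(γt − 1), Γ(t) = ∫_t^∞ e^{−s²} ds, and n_γ(t) = Γ(t) + Γ(σ(t)). Then n_γ is twice differentiable at t = 2/γ with n_γ″(2/γ) = (2/γ) e^{−4/γ²} (4 − γ²); in particular, if γ > 2 then t = 2/γ is a strict local maximum point of n_γ. -/
open MeasureTheory Filter Topology

/-- `Γ(t) = ∫_t^∞ e^{-s²} ds`. -/
noncomputable def GammaInt (t : ℝ) : ℝ := ∫ s in Set.Ioi t, Real.exp (-s ^ 2)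

lemma integrable_gauss : Integrable (fun s : ℝ => Real.exp (-s ^ 2)) := by
  simpa using integrable_exp_neg_mul_sq (one_pos)

lemma hasDerivAt_gammaInt (t : ℝ) : HasDerivAt GammaInt (-Real.exp (-t ^ 2)) t := by
  have hi := integrable_gauss
  have hc : Continuous (fun s : ℝ => Real.exp (-s ^ 2)) := by fun_prop
  have key : ∀ u : ℝ, GammaInt u =
      ((∫ s, Real.exp (-s ^ 2)) - ∫ s in Set.Iic (0:ℝ), Real.exp (-s ^ 2))
        - ∫ s in (0:ℝ)..u, Real.exp (-s ^ 2) := by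
    intro u
    have h1 := intervalIntegral.integral_Iic_add_Ioi (b := u) hi.integrableOn hi.integrableOn
    have h2 := intervalIntegral.integral_Iic_sub_Iic (a := (0:ℝ)) (b := u)
      hi.integrableOn hi.integrableOn
    unfold GammaInt
    linarith
  have hderiv : HasDerivAt (fun u => ∫ s in (0:ℝ)..u, Real.exp (-s ^ 2))
      (Real.exp (-t ^ 2)) t :=
    intervalIntegral.integral_hasDerivAt_right hi.intervalIntegrable
      (hc.stronglyMeasurable.stronglyMeasurableAtFilter) hc.continuousAt
  have h := (hasDerivAt_const t ((∫ s, Real.exp (-s ^ 2))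
      - ∫ s in Set.Iic (0:ℝ), Real.exp (-s ^ 2))).sub hderiv
  have heq : GammaInt = fun u => ((∫ s, Real.exp (-s ^ 2))
      - ∫ s in Set.Iic (0:ℝ), Real.exp (-s ^ 2)) - ∫ s in (0:ℝ)..u, Real.exp (-s ^ 2) :=
    funext key
  rw [heq]
  exact h.congr_deriv (zero_sub _)

/-- `n_γ(t) = Γ(t) + Γ(t/(γt - 1))`. -/
noncomputable def nGamma (γ t : ℝ) : ℝ := GammaInt t + GammaInt (t / (γ * t - 1))

noncomputable def nPrime (γ : ℝ) : ℝ → ℝ :=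
  fun t => -Real.exp (-t ^ 2) + Real.exp (-(t / (γ * t - 1)) ^ 2) * ((γ * t - 1) ^ 2)⁻¹

lemma hasDerivAt_nGamma (γ : ℝ) (hγ : 0 < γ) (t : ℝ) (ht : 1 / γ < t) :
    HasDerivAt (nGamma γ) (nPrime γ t) t := by
  have hne : γ * t - 1 ≠ 0 := by
    have : 1 < γ * t := by
      rw [div_lt_iff₀ hγ] at ht; linarith [ht]
    linarith
  have hσ : HasDerivAt (fun u : ℝ => u / (γ * u - 1)) (-((γ * t - 1) ^ 2)⁻¹) t := by
    have h := (hasDerivAt_id t).div (((hasDerivAt_id t).const_mul γ).sub_const 1) hne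
    refine (h).congr_deriv (Eq.symm ?_)
    simp only [id_eq]
    field_simp
    ring
  have h2 := (hasDerivAt_gammaInt (t / (γ * t - 1))).comp t hσ
  have h := (hasDerivAt_gammaInt t).add h2
  refine (h).congr_deriv (Eq.symm ?_)
  unfold nPrime
  ring

lemma hasDerivAt_nPrime (γ : ℝ) (hγ : 0 < γ) :
    HasDerivAt (nPrime γ) (2 / γ * Real.exp (-4 / γ ^ 2) * (4 - γ ^ 2)) (2 / γ) := by
  set b := 2 / γ with hbdef
  have hγ' : γ ≠ 0 := ne_of_gt hγ
  have hb1 : γ * b - 1 = 1 := by rw [hbdef]; field_simp; ring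
  have hne : γ * b - 1 ≠ 0 := by rw [hb1]; norm_num
  have hσval : b / (γ * b - 1) = b := by rw [hb1, div_one]
  -- derivative of σ at b
  have hσ : HasDerivAt (fun u : ℝ => u / (γ * u - 1)) (-1) b := by
    have h := (hasDerivAt_id b).div (((hasDerivAt_id b).const_mul γ).sub_const 1) hne
    refine (h).congr_deriv (Eq.symm ?_)
    simp only [id_eq, one_mul, mul_one]
    rw [hb1]
    have h2 : b * γ = 2 := by rw [hbdef]; field_simp
    norm_num
    linarith
  -- derivative of first summand
  have hA : HasDerivAt (fun t : ℝ => -Real.exp (-t ^ 2)) (2 * b * Real.exp (-b ^ 2)) b := by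
    have h1 : HasDerivAt (fun t : ℝ => -t ^ 2) (-(2 * b)) b := by
      have := (hasDerivAt_pow 2 b).neg
      simp at this
      exact this
    have h2 := (Real.hasDerivAt_exp (-b ^ 2)).comp b h1
    have := h2.neg
    refine (this).congr_deriv (Eq.symm ?_)
    ring
  -- derivative of exp(-σ²)
  have hB : HasDerivAt (fun t : ℝ => Real.exp (-(t / (γ * t - 1)) ^ 2))
      (Real.exp (-b ^ 2) * (2 * b)) b := by
    have h1 : HasDerivAt (fun t : ℝ => -(t / (γ * t - 1)) ^ 2) (2 * b) b := by
      have h := ((hasDerivAt_pow 2 (b / (γ * b - 1))).comp b hσ).neg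
      refine (h).congr_deriv (Eq.symm ?_)
      rw [hσval]
      ring
    have h2 := (Real.hasDerivAt_exp (-(b / (γ * b - 1)) ^ 2)).comp b h1
    refine (h2).congr_deriv (Eq.symm ?_)
    rw [hσval]
  -- derivative of ((γt-1)²)⁻¹
  have hC : HasDerivAt (fun t : ℝ => ((γ * t - 1) ^ 2)⁻¹) (-(2 * γ)) b := by
    have h1 : HasDerivAt (fun t : ℝ => (γ * t - 1) ^ 2) (2 * γ) b := by
      have h := (hasDerivAt_pow 2 (γ * b - 1)).comp b
        (((hasDerivAt_id b).const_mul γ).sub_const 1)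
      refine (h).congr_deriv (Eq.symm ?_)
      rw [hb1]
      ring
    have h2 := h1.inv (by rw [hb1]; norm_num)
    refine (h2).congr_deriv (Eq.symm ?_)
    rw [hb1]
    norm_num
  have h := hA.add (hB.mul hC)
  have hval : (b / (γ * b - 1)) = b := hσval
  have heq : nPrime γ = fun t : ℝ =>
      -Real.exp (-t ^ 2) + Real.exp (-(t / (γ * t - 1)) ^ 2) * ((γ * t - 1) ^ 2)⁻¹ := rfl
  rw [heq]
  refine (h).congr_deriv (Eq.symm ?_)
  rw [hσval, hb1]
  have hexp : -b ^ 2 = -4 / γ ^ 2 := by rw [hbdef]; field_simp; ring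
  rw [hexp, hbdef]
  field_simp
  ring

/-- For `γ > 0`, the function `n_γ` is twice differentiable at `t = 2/γ` with
`n_γ''(2/γ) = (2/γ) e^{-4/γ²} (4 - γ²)`; in particular if `γ > 2` then `2/γ` is a strict
local maximum point of `n_γ`. -/
theorem nGamma_second_deriv (γ : ℝ) (hγ : 0 < γ) :
    ∃ n' : ℝ → ℝ,
      (∀ t : ℝ, 1 / γ < t → HasDerivAt (nGamma γ) (n' t) t) ∧
      HasDerivAt n' (2 / γ * Real.exp (-4 / γ ^ 2) * (4 - γ ^ 2)) (2 / γ) ∧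
      (2 < γ → ∀ᶠ t in 𝓝[≠] (2 / γ), nGamma γ t < nGamma γ (2 / γ)) := by
  refine ⟨nPrime γ, hasDerivAt_nGamma γ hγ, hasDerivAt_nPrime γ hγ, ?_⟩
  intro hγ2
  set b := 2 / γ with hbdef
  have hγ' : γ ≠ 0 := ne_of_gt hγ
  have hb1 : γ * b - 1 = 1 := by rw [hbdef]; field_simp; ring
  have hblt : 1 / γ < b := by
    rw [hbdef, div_lt_div_iff₀ hγ hγ]; nlinarith
  -- n'(b) = 0
  have hn0 : nPrime γ b = 0 := by
    unfold nPrime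
    rw [hb1, div_one]
    norm_num
  -- n''(b) < 0
  have hneg : 2 / γ * Real.exp (-4 / γ ^ 2) * (4 - γ ^ 2) < 0 := by
    have h3 : 4 - γ ^ 2 < 0 := by nlinarith
    exact mul_neg_of_pos_of_neg (by positivity) h3
  -- slope of nPrime tends to n''(b) < 0
  have hslope : Tendsto (slope (nPrime γ) b) (𝓝[≠] b)
      (𝓝 (2 / γ * Real.exp (-4 / γ ^ 2) * (4 - γ ^ 2))) :=
    hasDerivAt_iff_tendsto_slope.mp (hasDerivAt_nPrime γ hγ)
  have hev : ∀ᶠ t in 𝓝[≠] b, slope (nPrime γ) b t < 0 :=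
    hslope.eventually (Filter.Tendsto.eventually_lt_const hneg tendsto_id)
  obtain ⟨ε, hε, hsub⟩ := Metric.mem_nhdsWithin_iff.mp hev
  set δ := min (ε / 2) ((b - 1 / γ) / 2) with hδdef
  have hδpos : 0 < δ := lt_min (by linarith) (by linarith)
  have hδε : δ < ε := lt_of_le_of_lt (min_le_left _ _) (by linarith)
  have hδb : δ ≤ (b - 1 / γ) / 2 := min_le_right _ _
  have hmem : ∀ x : ℝ, b - δ ≤ x → 1 / γ < x := by
    intro x h1; linarith
  have hd := hasDerivAt_nGamma γ hγ
  -- nPrime is positive left of b, negative right of b (within δ)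
  have hsign : ∀ x : ℝ, b - δ < x → x < b + δ → x ≠ b → slope (nPrime γ) b x < 0 := by
    intro x h1 h2 hne
    refine hsub ⟨?_, hne⟩
    rw [Real.ball_eq_Ioo]
    constructor <;> [linarith; linarith]
  have hposL : ∀ x ∈ Set.Ioo (b - δ) b, 0 < nPrime γ x := by
    intro x hx
    have h := hsign x hx.1 (by linarith [hx.2]) (ne_of_lt hx.2)
    rw [slope_def_field, hn0, sub_zero] at h
    by_contra hle
    push_neg at hle
    have := div_nonneg_of_nonpos hle (by linarith [hx.2] : x - b ≤ 0)
    linarith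
  have hnegR : ∀ x ∈ Set.Ioo b (b + δ), nPrime γ x < 0 := by
    intro x hx
    have h := hsign x (by linarith [hx.1]) hx.2 (ne_of_gt hx.1)
    rw [slope_def_field, hn0, sub_zero] at h
    by_contra hle
    push_neg at hle
    have := div_nonneg hle (by linarith [hx.1] : 0 ≤ x - b)
    linarith
  have hmono : StrictMonoOn (nGamma γ) (Set.Icc (b - δ) b) := by
    apply strictMonoOn_of_deriv_pos (convex_Icc _ _)
    · intro x hx
      exact (hd x (hmem x hx.1)).continuousAt.continuousWithinAt
    · intro x hx
      rw [interior_Icc] at hx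
      rw [(hd x (hmem x (le_of_lt hx.1))).deriv]
      exact hposL x hx
  have hanti : StrictAntiOn (nGamma γ) (Set.Icc b (b + δ)) := by
    apply strictAntiOn_of_deriv_neg (convex_Icc _ _)
    · intro x hx
      exact (hd x (hmem x (by linarith [hx.1]))).continuousAt.continuousWithinAt
    · intro x hx
      rw [interior_Icc] at hx
      rw [(hd x (hmem x (by linarith [hx.1]))).deriv]
      exact hnegR x hx
  filter_upwards [self_mem_nhdsWithin,
    mem_nhdsWithin_of_mem_nhds (Metric.ball_mem_nhds b hδpos)] with t htne htball
  rw [Real.ball_eq_Ioo] at htball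
  rcases lt_or_gt_of_ne (htne : t ≠ b) with hlt | hgt
  · exact hmono ⟨le_of_lt htball.1, le_of_lt hlt⟩ ⟨by linarith, le_refl b⟩ hlt
  · exact hanti ⟨le_refl b, by linarith⟩ ⟨le_of_lt hgt, le_of_lt htball.2⟩ hgt
end

section
/- Define B : [0,∞) → ℝ by B(s) = s² Log(s²) + A(s), where A(s) = −s² Log(s²) for 0 ≤ s ≤ e^{−3} and A(s) = 3s² + 4e^{−3}s − e^{−6} for s ≥ e^{−3}, and define b : ℂ → ℂ by b(z) = (z/|z|²) B(|z|) for z ≠ 0 and b(0) = 0. Then for every ε > 0 there exists a constant C_ε > 0 such that |b(z) − b(z₁)| ≤ C_ε |z − z₁| (|z| + |z₁|)^ε for all z, z₁ ∈ ℂ. -/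
/-- The truncation `A` of the logarithmic nonlinearity near the origin. -/
noncomputable def Afun (s : ℝ) : ℝ :=
  if s ≤ Real.exp (-3) then -(s ^ 2 * Real.log (s ^ 2))
  else 3 * s ^ 2 + 4 * Real.exp (-3) * s - Real.exp (-6)

/-- `B(s) = s² Log(s²) + A(s)`. -/
noncomputable def Bfun (s : ℝ) : ℝ := s ^ 2 * Real.log (s ^ 2) + Afun s

/-- `b(z) = (z/|z|²) B(|z|)` for `z ≠ 0`, `b(0) = 0`. -/
noncomputable def bfun (z : ℂ) : ℂ :=
  if z = 0 then 0 else z / ((‖z‖ ^ 2 : ℝ) : ℂ) * ((Bfun ‖z‖ : ℝ) : ℂ)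

noncomputable def hfun (s : ℝ) : ℝ :=
  if s ≤ Real.exp (-3) then 0
  else Real.log (s ^ 2) + 3 + 4 * Real.exp (-3) / s - Real.exp (-6) / s ^ 2

lemma exp_neg_three_pos : (0:ℝ) < Real.exp (-3) := Real.exp_pos _

lemma hfun_eq_of_le {s : ℝ} (hs : Real.exp (-3) ≤ s) :
    hfun s = Real.log (s ^ 2) + 3 + 4 * Real.exp (-3) / s - Real.exp (-6) / s ^ 2 := by
  rcases eq_or_lt_of_le hs with h | h
  · have he : Real.exp (-3) ^ 2 = Real.exp (-6) := by
      rw [sq, ← Real.exp_add]; norm_num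
    rw [hfun, if_pos h.symm.le, ← h, he]
    have h1 : Real.log (Real.exp (-6)) = -6 := Real.log_exp _
    have h2 : Real.exp (-3) ≠ 0 := (Real.exp_pos _).ne'
    have h6 : Real.exp (-6) ≠ 0 := (Real.exp_pos _).ne'
    field_simp [h1]
    ring_nf; rw [h1]; norm_num
  · rw [hfun, if_neg (not_le.mpr h)]

lemma bfun_eq (z : ℂ) : bfun z = ((hfun ‖z‖ : ℝ) : ℂ) * z := by
  rcases eq_or_ne z 0 with rfl | hz
  · simp [bfun]
  · have hs : (0:ℝ) < ‖z‖ := norm_pos_iff.mpr hz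
    rw [bfun, if_neg hz]
    set s := ‖z‖ with hsdef
    have hne : s ≠ 0 := hs.ne'
    have hc : ((s:ℝ):ℂ) ≠ 0 := by exact_mod_cast hne
    by_cases hle : s ≤ Real.exp (-3)
    · rw [hfun, if_pos hle, Bfun, Afun, if_pos hle]
      push_cast
      ring
    · push_neg at hle
      have hB : Bfun s = hfun s * s ^ 2 := by
        rw [hfun, if_neg (not_le.mpr hle), Bfun, Afun, if_neg (not_le.mpr hle)]
        field_simp [hne]
        ring
      rw [hB]
      push_cast
      field_simp

/-- Lipschitz-type bound on the region `[e^{-3}, ∞)`. -/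
lemma hfun_lip {s s₁ : ℝ} (hs : Real.exp (-3) ≤ s) (h : s ≤ s₁) :
    |hfun s₁ - hfun s| ≤ 8 * (s₁ - s) / s := by
  have hs0 : (0:ℝ) < s := lt_of_lt_of_le exp_neg_three_pos hs
  have hs10 : (0:ℝ) < s₁ := lt_of_lt_of_le hs0 h
  have hs1 : Real.exp (-3) ≤ s₁ := le_trans hs h
  rw [hfun_eq_of_le hs, hfun_eq_of_le hs1]
  have e3 : (0:ℝ) < Real.exp (-3) := exp_neg_three_pos
  have e6 : (0:ℝ) < Real.exp (-6) := Real.exp_pos _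
  -- log term
  have hT1 : 0 ≤ Real.log (s₁ ^ 2) - Real.log (s ^ 2) ∧
      Real.log (s₁ ^ 2) - Real.log (s ^ 2) ≤ 2 * (s₁ - s) / s := by
    constructor
    · have := Real.log_le_log (by positivity) (by nlinarith : s ^ 2 ≤ s₁ ^ 2)
      linarith
    · have hlog : Real.log (s₁ ^ 2) - Real.log (s ^ 2) = 2 * Real.log (s₁ / s) := by
        rw [Real.log_div hs10.ne' hs0.ne', Real.log_pow, Real.log_pow]
        push_cast; ring
      have h2 : Real.log (s₁ / s) ≤ s₁ / s - 1 :=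
        Real.log_le_sub_one_of_pos (by positivity)
      have h3 : 2 * (s₁ / s) - 2 = 2 * (s₁ - s) / s := by
        field_simp
      rw [hlog]
      linarith
  -- 1/s term
  have hT2 : 0 ≤ 4 * Real.exp (-3) / s - 4 * Real.exp (-3) / s₁ ∧
      4 * Real.exp (-3) / s - 4 * Real.exp (-3) / s₁ ≤ 4 * (s₁ - s) / s := by
    constructor
    · apply sub_nonneg.mpr
      apply div_le_div_of_nonneg_left (by positivity) hs0 h
    · have : 4 * Real.exp (-3) / s - 4 * Real.exp (-3) / s₁
          = 4 * Real.exp (-3) * (s₁ - s) / (s * s₁) := by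
        field_simp
      rw [this, div_le_div_iff₀ (by positivity) hs0]
      nlinarith [mul_nonneg (sub_nonneg.mpr h) hs0.le,
        mul_le_mul_of_nonneg_right hs1 hs0.le]
  -- 1/s² term
  have hT3 : 0 ≤ Real.exp (-6) / s ^ 2 - Real.exp (-6) / s₁ ^ 2 ∧
      Real.exp (-6) / s ^ 2 - Real.exp (-6) / s₁ ^ 2 ≤ 2 * (s₁ - s) / s := by
    have he : Real.exp (-6) = Real.exp (-3) * Real.exp (-3) := by
      rw [← Real.exp_add]; norm_num
    constructor
    · apply sub_nonneg.mpr
      apply div_le_div_of_nonneg_left e6.le (by positivity) (by nlinarith)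
    · have : Real.exp (-6) / s ^ 2 - Real.exp (-6) / s₁ ^ 2
          = Real.exp (-6) * ((s₁ - s) * (s₁ + s)) / (s ^ 2 * s₁ ^ 2) := by
        field_simp; ring
      rw [this, div_le_div_iff₀ (by positivity) hs0]
      have p1 : Real.exp (-6) ≤ s * s₁ := by nlinarith
      have key : Real.exp (-6) * ((s₁ - s) * (s₁ + s)) * s
          ≤ (s * s₁) * ((s₁ - s) * (2 * s₁)) * s := by
        apply mul_le_mul_of_nonneg_right _ hs0.le
        apply mul_le_mul p1 (by nlinarith) (by nlinarith) (by positivity)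
      calc Real.exp (-6) * ((s₁ - s) * (s₁ + s)) * s
          ≤ (s * s₁) * ((s₁ - s) * (2 * s₁)) * s := key
        _ = 2 * (s₁ - s) * (s ^ 2 * s₁ ^ 2) := by ring
  rw [abs_le]
  constructor <;> [skip; skip] <;>
    · obtain ⟨a1, b1⟩ := hT1; obtain ⟨a2, b2⟩ := hT2; obtain ⟨a3, b3⟩ := hT3
      have : (8:ℝ) * (s₁ - s) / s = 2 * (s₁ - s) / s + 4 * (s₁ - s) / s + 2 * (s₁ - s) / s := by
        ring
      rw [this] at *
      linarith

lemma hfun_mul_lip {s s₁ : ℝ} (hs : 0 ≤ s) (h : s ≤ s₁) :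
    s * |hfun s - hfun s₁| ≤ 8 * (s₁ - s) := by
  rw [abs_sub_comm]
  by_cases h1 : s₁ ≤ Real.exp (-3)
  · have hz : hfun s = 0 := by rw [hfun, if_pos (le_trans h h1)]
    have hz1 : hfun s₁ = 0 := by rw [hfun, if_pos h1]
    rw [hz, hz1]
    simp
    nlinarith
  · push_neg at h1
    by_cases h2 : Real.exp (-3) ≤ s
    · have := hfun_lip h2 h
      have hs0 : (0:ℝ) < s := lt_of_lt_of_le exp_neg_three_pos h2
      calc s * |hfun s₁ - hfun s| ≤ s * (8 * (s₁ - s) / s) := by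
            apply mul_le_mul_of_nonneg_left this hs0.le
        _ = 8 * (s₁ - s) := by field_simp
    · push_neg at h2
      have hz : hfun s = 0 := by rw [hfun, if_pos h2.le]
      have hze : hfun (Real.exp (-3)) = 0 := by rw [hfun, if_pos le_rfl]
      have := hfun_lip (le_refl (Real.exp (-3))) h1.le
      rw [hze, sub_zero] at this
      rw [hz, sub_zero]
      have e3 : (0:ℝ) < Real.exp (-3) := exp_neg_three_pos
      calc s * |hfun s₁| ≤ Real.exp (-3) * (8 * (s₁ - Real.exp (-3)) / Real.exp (-3)) := by
            apply mul_le_mul h2.le this (abs_nonneg _) e3.le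
        _ = 8 * (s₁ - Real.exp (-3)) := by field_simp
        _ ≤ 8 * (s₁ - s) := by nlinarith

lemma hfun_bound {s : ℝ} : |hfun s| ≤ 2 * |Real.log s| + 8 := by
  by_cases h1 : s ≤ Real.exp (-3)
  · rw [hfun, if_pos h1]; simp; positivity
  · push_neg at h1
    have e3 : (0:ℝ) < Real.exp (-3) := exp_neg_three_pos
    have e6 : (0:ℝ) < Real.exp (-6) := Real.exp_pos _
    have hs0 : (0:ℝ) < s := lt_trans e3 h1
    rw [hfun, if_neg (not_le.mpr h1)]
    have hlog : Real.log (s ^ 2) = 2 * Real.log s := by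
      rw [Real.log_pow]; push_cast; ring
    have hb1 : 4 * Real.exp (-3) / s ≤ 4 := by
      rw [div_le_iff₀ hs0]; nlinarith
    have hb2 : Real.exp (-6) / s ^ 2 ≤ 1 := by
      rw [div_le_one (by positivity)]
      have he : Real.exp (-6) = Real.exp (-3) * Real.exp (-3) := by
        rw [← Real.exp_add]; norm_num
      nlinarith
    have hb1' : 0 ≤ 4 * Real.exp (-3) / s := by positivity
    have hb2' : 0 ≤ Real.exp (-6) / s ^ 2 := by positivity
    rw [hlog]
    have := abs_le.mp (le_refl |Real.log s|)
    rw [abs_le]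
    constructor <;> nlinarith [neg_abs_le (Real.log s), le_abs_self (Real.log s)]

lemma key_calc {ε : ℝ} (hε : 0 < ε) {u : ℝ} (hu : Real.exp (-3) ≤ u) :
    2 * |Real.log u| + 16 ≤ Real.exp (3 * ε) * (22 + 2 / ε) * u ^ ε := by
  have hu0 : (0:ℝ) < u := lt_of_lt_of_le exp_neg_three_pos hu
  have hC1 : (1:ℝ) ≤ Real.exp (3 * ε) := Real.one_le_exp (by positivity)
  have hrpos : (0:ℝ) < u ^ ε := Real.rpow_pos_of_pos hu0 ε
  by_cases h1 : u ≤ 1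
  · have hlog_lb : -3 ≤ Real.log u := by
      have := Real.log_le_log exp_neg_three_pos hu
      rwa [Real.log_exp] at this
    have hlog_ub : Real.log u ≤ 0 := Real.log_nonpos hu0.le h1
    have habs : |Real.log u| ≤ 3 := abs_le.mpr ⟨hlog_lb, by linarith⟩
    have hrlb : Real.exp (-(3 * ε)) ≤ u ^ ε := by
      have := Real.rpow_le_rpow exp_neg_three_pos.le hu hε.le
      calc Real.exp (-(3*ε)) = Real.exp (-3) ^ ε := by
            rw [← Real.exp_mul]; ring_nf
        _ ≤ u ^ ε := this
    have h2 : Real.exp (3 * ε) * Real.exp (-(3 * ε)) = 1 := by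
      rw [← Real.exp_add]; simp
    have h3 : Real.exp (3 * ε) * (22 + 2 / ε) * u ^ ε ≥ Real.exp (3 * ε) * 22 * Real.exp (-(3*ε)) := by
      have h4 : Real.exp (3 * ε) * 22 ≤ Real.exp (3 * ε) * (22 + 2 / ε) := by
        have : (0:ℝ) ≤ 2 / ε := by positivity
        nlinarith [Real.exp_pos (3*ε)]
      nlinarith [Real.exp_pos (3*ε), Real.exp_pos (-(3*ε)), hrlb]
    have : Real.exp (3 * ε) * 22 * Real.exp (-(3 * ε)) = 22 := by
      rw [mul_comm (Real.exp (3*ε)) 22, mul_assoc, h2, mul_one]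
    linarith
  · push_neg at h1
    have hlog : 0 ≤ Real.log u := Real.log_nonneg h1.le
    have hr1 : (1:ℝ) ≤ u ^ ε := Real.one_le_rpow h1.le hε.le
    have hlog_rpow : ε * Real.log u ≤ u ^ ε := by
      have := Real.log_le_sub_one_of_pos hrpos
      rw [Real.log_rpow hu0] at this
      linarith
    have h2 : 2 * Real.log u ≤ 2 / ε * u ^ ε := by
      rw [div_mul_eq_mul_div, le_div_iff₀ hε]
      nlinarith
    have habs : |Real.log u| = Real.log u := abs_of_nonneg hlog
    rw [habs]
    have h16 : (16:ℝ) ≤ 16 * u ^ ε := by nlinarith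
    have hfinal : (2 / ε + 16) * u ^ ε ≤ Real.exp (3 * ε) * (22 + 2 / ε) * u ^ ε := by
      apply mul_le_mul_of_nonneg_right _ hrpos.le
      have : (0:ℝ) ≤ 2 / ε := by positivity
      nlinarith
    nlinarith

lemma bfun_main {ε : ℝ} (hε : 0 < ε) (z z₁ : ℂ) (hle : ‖z‖ ≤ ‖z₁‖) :
    ‖bfun z - bfun z₁‖ ≤ Real.exp (3 * ε) * (22 + 2 / ε) * ‖z - z₁‖ * (‖z‖ + ‖z₁‖) ^ ε := by
  have hC : (0:ℝ) < Real.exp (3 * ε) * (22 + 2 / ε) := by positivity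
  by_cases h1 : ‖z₁‖ ≤ Real.exp (-3)
  · have hz : hfun ‖z‖ = 0 := by rw [hfun, if_pos (le_trans hle h1)]
    have hz1 : hfun ‖z₁‖ = 0 := by rw [hfun, if_pos h1]
    rw [bfun_eq, bfun_eq, hz, hz1]
    simp
    positivity
  · push_neg at h1
    set s := ‖z‖ with hsdef
    set s₁ := ‖z₁‖ with hs1def
    have hkey : ‖bfun z - bfun z₁‖ ≤ (2 * |Real.log s₁| + 16) * ‖z - z₁‖ := by
      have hdecomp : bfun z - bfun z₁
          = ((hfun s₁ : ℝ) : ℂ) * (z - z₁) + (((hfun s - hfun s₁ : ℝ)) : ℂ) * z := by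
        rw [bfun_eq, bfun_eq]
        push_cast
        ring
      rw [hdecomp]
      have hn1 : ‖((hfun s₁ : ℝ) : ℂ) * (z - z₁)‖ = |hfun s₁| * ‖z - z₁‖ := by
        rw [norm_mul, Complex.norm_real, Real.norm_eq_abs]
      have hn2 : ‖(((hfun s - hfun s₁ : ℝ)) : ℂ) * z‖ = |hfun s - hfun s₁| * s := by
        rw [norm_mul, Complex.norm_real, Real.norm_eq_abs]
      have hnsub : s₁ - s ≤ ‖z - z₁‖ := by
        have := abs_norm_sub_norm_le z₁ z
        have h' := (abs_le.mp this).2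
        rw [norm_sub_rev] at h'
        linarith
      have hlip : s * |hfun s - hfun s₁| ≤ 8 * (s₁ - s) :=
        hfun_mul_lip (norm_nonneg z) hle
      have hb : |hfun s₁| ≤ 2 * |Real.log s₁| + 8 := hfun_bound
      calc ‖((hfun s₁ : ℝ) : ℂ) * (z - z₁) + (((hfun s - hfun s₁ : ℝ)) : ℂ) * z‖
          ≤ |hfun s₁| * ‖z - z₁‖ + |hfun s - hfun s₁| * s := by
            rw [← hn1, ← hn2]; exact norm_add_le _ _
        _ ≤ (2 * |Real.log s₁| + 8) * ‖z - z₁‖ + 8 * (s₁ - s) := by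
            have := mul_le_mul_of_nonneg_right hb (norm_nonneg (z - z₁))
            nlinarith [abs_nonneg (hfun s - hfun s₁), norm_nonneg (z - z₁)]
        _ ≤ (2 * |Real.log s₁| + 8) * ‖z - z₁‖ + 8 * ‖z - z₁‖ := by linarith
        _ = (2 * |Real.log s₁| + 16) * ‖z - z₁‖ := by ring
    have hkc : 2 * |Real.log s₁| + 16 ≤ Real.exp (3 * ε) * (22 + 2 / ε) * s₁ ^ ε :=
      key_calc hε h1.le
    have hmono : s₁ ^ ε ≤ (s + s₁) ^ ε := by
      apply Real.rpow_le_rpow (norm_nonneg z₁) (by linarith [norm_nonneg z]) hε.le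
    calc ‖bfun z - bfun z₁‖ ≤ (2 * |Real.log s₁| + 16) * ‖z - z₁‖ := hkey
      _ ≤ (Real.exp (3 * ε) * (22 + 2 / ε) * s₁ ^ ε) * ‖z - z₁‖ := by
          apply mul_le_mul_of_nonneg_right hkc (norm_nonneg _)
      _ ≤ (Real.exp (3 * ε) * (22 + 2 / ε) * (s + s₁) ^ ε) * ‖z - z₁‖ := by
          apply mul_le_mul_of_nonneg_right _ (norm_nonneg _)
          exact mul_le_mul_of_nonneg_left hmono hC.le
      _ = Real.exp (3 * ε) * (22 + 2 / ε) * ‖z - z₁‖ * (s + s₁) ^ ε := by ring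

/-- For every `ε > 0` there is `C_ε > 0` with
`|b(z) - b(z₁)| ≤ C_ε |z - z₁| (|z| + |z₁|)^ε` for all `z, z₁ ∈ ℂ`. -/
theorem bfun_holder_estimate :
    ∀ ε : ℝ, 0 < ε → ∃ C : ℝ, 0 < C ∧ ∀ z z₁ : ℂ,
      ‖bfun z - bfun z₁‖ ≤ C * ‖z - z₁‖ * (‖z‖ + ‖z₁‖) ^ ε := by
  intro ε hε
  refine ⟨Real.exp (3 * ε) * (22 + 2 / ε), by positivity, fun z z₁ => ?_⟩
  rcases le_total ‖z‖ ‖z₁‖ with h | h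
  · exact bfun_main hε z z₁ h
  · have := bfun_main hε z₁ z h
    rw [norm_sub_rev (bfun z₁), norm_sub_rev z₁, add_comm ‖z₁‖] at this
    exact this
end
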